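/- arXiv:2308.13742 — 7 statements merged into one kernel-verified Lean document; each statement's English description precedes it below -/
import Mathlib

section
/- Let ε > 0 and let G be a nonempty finite simple graph with ρ(G) ≥ exp(e/ε). Then for every integer k with 1 ≤ k ≤ ρ(G)/ln ρ(G), G is k-DP-colorable with probability at most ε. -/
namespace DP

/-- Adjacency in the cover graph `H_σ` determined by the tuple `σ` of permutations
(one permutation of `Fin k` per edge of `G`): for an edge `uv` of `G` with `u < v`,
the vertex `(u, i)` is adjacent to `(v, σ_{uv} i)`, and there are no other edges. -/
def coverAdj {V : Type*} [LinearOrder V] (G : SimpleGraph V) (k : ℕ)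
    (σ : G.edgeSet → Equiv.Perm (Fin k)) (p q : V × Fin k) : Prop :=
  ∃ h : G.Adj p.1 q.1,
    (p.1 < q.1 ∧ (σ ⟨s(p.1, q.1), G.mem_edgeSet.mpr h⟩) p.2 = q.2) ∨
    (q.1 < p.1 ∧ (σ ⟨s(p.1, q.1), G.mem_edgeSet.mpr h⟩) q.2 = p.2)

/-- `T` is an independent `b`-fold transversal of the cover `H_σ`: it contains exactly
`b` elements of `{v} × Fin k` for each vertex `v`, and no two of its elements are
adjacent in `H_σ`. -/
def IsIndepTransversal {V : Type*} [LinearOrder V] (G : SimpleGraph V) (k b : ℕ)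
    (σ : G.edgeSet → Equiv.Perm (Fin k)) (T : Finset (V × Fin k)) : Prop :=
  (∀ v : V, (T.filter (fun p => p.1 = v)).card = b) ∧
    ∀ p ∈ T, ∀ q ∈ T, ¬ coverAdj G k σ p q

/-- The probability, over a uniformly random tuple `σ` of permutations (one per edge),
that the cover graph `H_σ` admits an independent `b`-fold transversal. -/
noncomputable def probColorable {V : Type*} [LinearOrder V] (G : SimpleGraph V)
    (k b : ℕ) : ℝ :=
  (Nat.card {σ : G.edgeSet → Equiv.Perm (Fin k) //
      ∃ T : Finset (V × Fin k), IsIndepTransversal G k b σ T} : ℝ) /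
    (Nat.card (G.edgeSet → Equiv.Perm (Fin k)) : ℝ)

/-- The maximum density `ρ(G)`: the maximum of `|E(G')|/|V(G')|` over all nonempty
subgraphs `G'` of `G`. -/
noncomputable def maxDensity {V : Type*} (G : SimpleGraph V) : ℝ :=
  sSup {d : ℝ | ∃ H : G.Subgraph, H.verts.Nonempty ∧
    d = (H.edgeSet.ncard : ℝ) / (H.verts.ncard : ℝ)}

/-!
If `H_σ` has an independent transversal `{(v, f v)}`, then `σ_{uv} (f u) ≠ f v` for every edge
`uv` with `u < v`. Take a subgraph `H` attaining `ρ(G)`. For a fixed colouring of `V(H)` these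
conditions on the edges of `H` are independent events of probability `1 - 1/k`, so a union bound
over the `k^|V(H)|` colourings of `V(H)` bounds the probability by
`k^|V(H)| (1 - 1/k)^|E(H)| ≤ exp (|V(H)| (ln k - ρ/k))`. As `k ≤ ρ / ln ρ`, the exponent is
at most `-|V(H)| ln ln ρ`, so the probability is at most `1 / ln ρ ≤ ε / e`.
-/

open Finset Equiv
open scoped Nat

section Permutations

variable {k : ℕ}

theorem card_perm_apply_eq_mul (a b : Fin k) : #{τ : Perm (Fin k) | τ a = b} * k = k ! := by
  have fiber (c : Fin k) : #{τ : Perm (Fin k) | τ a = c} = #{τ : Perm (Fin k) | τ a = b} :=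
    card_nbij' (swap b c * ·) (swap b c * ·) (by intro τ; simp +contextual)
      (by intro τ; simp +contextual) (fun τ _ => swap_mul_self_mul _ _ _)
      (fun τ _ => swap_mul_self_mul _ _ _)
  calc #{τ : Perm (Fin k) | τ a = b} * k = ∑ c : Fin k, #{τ : Perm (Fin k) | τ a = c} := by
        simp [fiber, mul_comm]
    _ = k ! := by
        rw [← card_eq_sum_card_fiberwise (fun τ _ => mem_univ (τ a)), card_univ,
          Fintype.card_perm, Fintype.card_fin]

theorem card_perm_apply_ne (hk : k ≠ 0) (a b : Fin k) :
    (Nat.card {τ : Perm (Fin k) // τ a ≠ b} : ℝ) = k ! * (1 - (k : ℝ)⁻¹) := by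
  classical
  have hsplit := card_filter_add_card_filter_not (s := (univ : Finset (Perm (Fin k))))
    (fun τ => τ a = b)
  rw [card_univ, Fintype.card_perm, Fintype.card_fin] at hsplit
  have hk' : (k : ℝ) ≠ 0 := by exact_mod_cast hk
  have heq : (#{τ : Perm (Fin k) | τ a = b} : ℝ) = k ! / k := by
    rw [eq_div_iff hk']
    exact_mod_cast card_perm_apply_eq_mul a b
  have hne : (#{τ : Perm (Fin k) | τ a ≠ b} : ℝ) =
      (k ! : ℝ) - #{τ : Perm (Fin k) | τ a = b} := by
    rw [eq_sub_iff_add_eq']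
    exact_mod_cast hsplit
  rw [Nat.card_eq_fintype_card, Fintype.card_subtype, hne, heq]
  field_simp

end Permutations

section Counting

variable {V : Type*} [LinearOrder V] {G : SimpleGraph V} {k : ℕ}

theorem IsIndepTransversal.exists_coloring {b : ℕ} {σ : G.edgeSet → Perm (Fin k)}
    {T : Finset (V × Fin k)} (hT : IsIndepTransversal G k b σ T) (hb : b ≠ 0) :
    ∃ f : V → Fin k, ∀ e : G.edgeSet, σ e (f e.1.inf) ≠ f e.1.sup := by
  have hfiber (v : V) : ∃ i, (v, i) ∈ T := by
    obtain ⟨p, hp⟩ := card_pos.mp ((hT.1 v).symm ▸ Nat.pos_of_ne_zero hb)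
    rw [mem_filter] at hp
    exact ⟨p.2, hp.2 ▸ hp.1⟩
  choose f hf using hfiber
  refine ⟨f, fun ⟨e, he⟩ hσ => ?_⟩
  have hsort : s(e.inf, e.sup) = e := Sym2.sortEquiv.symm_apply_apply e
  have hadj : G.Adj e.inf e.sup := by rw [← SimpleGraph.mem_edgeSet, hsort]; exact he
  refine hT.2 _ (hf e.inf) _ (hf e.sup)
    ⟨hadj, .inl ⟨(Sym2.inf_le_sup e).lt_of_ne hadj.ne, ?_⟩⟩
  convert hσ

variable [Finite V]

theorem card_avoiding_perms (hk : k ≠ 0) (H : G.Subgraph) (f : V → Fin k) :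
    (Nat.card {σ : G.edgeSet → Perm (Fin k) //
        ∀ e : G.edgeSet, e.1 ∈ H.edgeSet → σ e (f e.1.inf) ≠ f e.1.sup} : ℝ) =
      (k ! : ℝ) ^ Nat.card G.edgeSet * (1 - (k : ℝ)⁻¹) ^ H.edgeSet.ncard := by
  classical
  have : Fintype G.edgeSet := Fintype.ofFinite _
  have hfactor (e : G.edgeSet) :
      (Nat.card {τ : Perm (Fin k) // e.1 ∈ H.edgeSet → τ (f e.1.inf) ≠ f e.1.sup} : ℝ) =
        k ! * if e.1 ∈ H.edgeSet then 1 - (k : ℝ)⁻¹ else 1 := by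
    split_ifs with he
    · simpa only [he, true_imp_iff] using card_perm_apply_ne hk (f e.1.inf) (f e.1.sup)
    · simp [he, Fintype.card_perm]
  have hH : #{e : G.edgeSet | e.1 ∈ H.edgeSet} = H.edgeSet.ncard := by
    rw [← Fintype.card_subtype, ← Nat.card_eq_fintype_card, ← Nat.card_coe_set_eq]
    exact Nat.card_congr (subtypeSubtypeEquivSubtype fun hx => H.edgeSet_subset hx)
  have hpi := Nat.card_congr (subtypePiEquivPi (p := fun (e : G.edgeSet) (τ : Perm (Fin k)) =>
    e.1 ∈ H.edgeSet → τ (f e.1.inf) ≠ f e.1.sup))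
  rw [hpi, Nat.card_pi, Nat.cast_prod, prod_congr rfl fun e _ => hfactor e, prod_mul_distrib,
    prod_const, prod_ite, prod_const, prod_const_one, mul_one, hH, card_univ,
    Nat.card_eq_fintype_card]

theorem probColorable_le_one : probColorable G k 1 ≤ 1 :=
  div_le_one_of_le₀ (by exact_mod_cast Finite.card_subtype_le _) (Nat.cast_nonneg _)

theorem probColorable_le (hk : k ≠ 0) (H : G.Subgraph) :
    probColorable G k 1 ≤ k ^ H.verts.ncard * (1 - (k : ℝ)⁻¹) ^ H.edgeSet.ncard := by
  classical
  have : Fintype H.verts := Fintype.ofFinite _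
  let extend (g : H.verts → Fin k) (v : V) : Fin k :=
    if hv : v ∈ H.verts then g ⟨v, hv⟩ else ⟨0, Nat.pos_of_ne_zero hk⟩
  let Avoiding (g : H.verts → Fin k) := {σ : G.edgeSet → Perm (Fin k) //
    ∀ e : G.edgeSet, e.1 ∈ H.edgeSet → σ e (extend g e.1.inf) ≠ extend g e.1.sup}
  have hcoloring (σ : {σ : G.edgeSet → Perm (Fin k) //
      ∃ T : Finset (V × Fin k), IsIndepTransversal G k 1 σ T}) :
      ∃ g, ∀ e : G.edgeSet, e.1 ∈ H.edgeSet →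
        σ.1 e (extend g e.1.inf) ≠ extend g e.1.sup := by
    obtain ⟨f, hf⟩ := σ.2.choose_spec.exists_coloring one_ne_zero
    refine ⟨fun v => f v, fun e he => ?_⟩
    have hsort : s(e.1.inf, e.1.sup) = e.1 := Sym2.sortEquiv.symm_apply_apply e.1
    rw [← hsort] at he
    simpa [extend, H.edge_vert (H.mem_edgeSet.1 he), H.edge_vert (H.mem_edgeSet.1 he).symm]
      using hf e
  choose g hg using hcoloring
  have hunion : Nat.card {σ : G.edgeSet → Perm (Fin k) //
      ∃ T : Finset (V × Fin k), IsIndepTransversal G k 1 σ T} ≤ Nat.card (Σ g, Avoiding g) :=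
    Nat.card_le_card_of_injective (fun σ => ⟨g σ, σ.1, hg σ⟩)
      fun σ σ' h => Subtype.ext (congrArg (fun p => (p.2 : G.edgeSet → Perm (Fin k))) h)
  have hk' : (0 : ℝ) < k ! ^ Nat.card G.edgeSet := by positivity
  rw [probColorable, Nat.card_fun, Nat.card_perm, Nat.card_fin, Nat.cast_pow, div_le_iff₀ hk']
  calc _ ≤ (Nat.card (Σ g, Avoiding g) : ℝ) := by exact_mod_cast hunion
    _ = _ := by
      simp only [Nat.card_sigma, Nat.cast_sum, Avoiding, card_avoiding_perms hk, sum_const,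
        card_univ, Fintype.card_fun, Fintype.card_fin, nsmul_eq_mul, Nat.cast_pow]
      rw [← Nat.card_eq_fintype_card, Nat.card_coe_set_eq]
      ring

end Counting

theorem exists_subgraph_maxDensity_eq {V : Type*} [Finite V] {G : SimpleGraph V}
    (h : maxDensity G ≠ 0) :
    ∃ H : G.Subgraph, H.verts.Nonempty ∧
      maxDensity G = (H.edgeSet.ncard : ℝ) / (H.verts.ncard : ℝ) := by
  set S := {d : ℝ | ∃ H : G.Subgraph, H.verts.Nonempty ∧
    d = (H.edgeSet.ncard : ℝ) / (H.verts.ncard : ℝ)}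
  have hS : S.Nonempty := by
    rw [Set.nonempty_iff_ne_empty]
    rintro hS
    exact h (show sSup S = 0 by rw [hS, Real.sSup_empty])
  have hfin : S.Finite :=
    (Set.finite_range fun H : G.Subgraph => (H.edgeSet.ncard : ℝ) / H.verts.ncard).subset
      fun _ ⟨H, _, hd⟩ => ⟨H, hd.symm⟩
  exact hS.csSup_mem hfin

theorem natCast_pow_mul_one_sub_inv_pow_le_exp {k : ℕ} (hk : k ≠ 0) (v m : ℕ) :
    (k : ℝ) ^ v * (1 - (k : ℝ)⁻¹) ^ m ≤ Real.exp (v * Real.log k - m / k) := by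
  have hpow : (k : ℝ) ^ v = Real.exp (v * Real.log k) := by
    rw [← Real.log_pow, Real.exp_log (by positivity)]
  have hk1 : (0 : ℝ) ≤ 1 - (k : ℝ)⁻¹ :=
    sub_nonneg.2 (inv_le_one_of_one_le₀ (by exact_mod_cast Nat.one_le_iff_ne_zero.2 hk))
  have hfactor : (1 - (k : ℝ)⁻¹) ^ m ≤ Real.exp (-(m / k)) := by
    calc (1 - (k : ℝ)⁻¹) ^ m ≤ Real.exp (-(k : ℝ)⁻¹) ^ m :=
          pow_le_pow_left₀ hk1 (Real.one_sub_le_exp_neg _) m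
      _ = Real.exp (-(m / k)) := by rw [← Real.exp_nat_mul]; ring_nf
  rw [sub_eq_add_neg (_ * _), Real.exp_add, hpow]
  gcongr

theorem mul_log_sub_div_le_neg_log_log {ρ k v : ℝ} (hρ : 1 ≤ Real.log ρ) (hk : 0 < k)
    (hkρ : k ≤ ρ / Real.log ρ) (hv : 1 ≤ v) :
    v * Real.log k - ρ * v / k ≤ -Real.log (Real.log ρ) := by
  set L := Real.log ρ
  have hL : 0 < L := by linarith
  have hρ0 : 0 < ρ := (div_pos_iff_of_pos_right hL).1 (hk.trans_le hkρ)
  have hlogk : Real.log k ≤ L - Real.log L := by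
    rw [← Real.log_div hρ0.ne' hL.ne']
    exact Real.log_le_log hk hkρ
  have hdiv : L ≤ ρ / k := by
    rw [le_div_iff₀ hk]
    rwa [le_div_iff₀ hL, mul_comm] at hkρ
  have hlogL : 0 ≤ Real.log L := Real.log_nonneg hρ
  calc v * Real.log k - ρ * v / k = v * (Real.log k - ρ / k) := by ring
    _ ≤ v * (-Real.log L) := by gcongr; linarith
    _ ≤ -Real.log L := by nlinarith

theorem statement_0_general (ε : ℝ) (hε : 0 < ε) (n : ℕ)
    (G : SimpleGraph (Fin n)) (hρ : Real.exp (Real.exp 1 / ε) ≤ maxDensity G)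
    (k : ℕ) (hk1 : 1 ≤ k)
    (hk2 : (k : ℝ) ≤ maxDensity G / Real.log (maxDensity G)) :
    probColorable G k 1 ≤ ε := by
  rcases le_or_gt 1 ε with hε1 | hε1
  · exact probColorable_le_one.trans hε1
  have hk : k ≠ 0 := Nat.one_le_iff_ne_zero.mp hk1
  have hρ0 : 0 < maxDensity G := (Real.exp_pos _).trans_le hρ
  have hL : Real.exp 1 / ε ≤ Real.log (maxDensity G) := (Real.le_log_iff_exp_le hρ0).2 hρ
  have hL1 : 1 ≤ Real.log (maxDensity G) := by
    refine le_trans ?_ hL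
    rw [le_div_iff₀ hε]
    linarith [Real.add_one_le_exp 1]
  obtain ⟨H, hne, hdens⟩ := exists_subgraph_maxDensity_eq hρ0.ne'
  have hv : (1 : ℝ) ≤ H.verts.ncard := by exact_mod_cast (Set.ncard_pos H.verts.toFinite).2 hne
  have hm : (H.edgeSet.ncard : ℝ) = maxDensity G * H.verts.ncard := by
    rw [hdens, div_mul_cancel₀ _ (by positivity)]
  calc probColorable G k 1 ≤ k ^ H.verts.ncard * (1 - (k : ℝ)⁻¹) ^ H.edgeSet.ncard :=
        probColorable_le hk H
    _ ≤ Real.exp (H.verts.ncard * Real.log k - H.edgeSet.ncard / k) :=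
        natCast_pow_mul_one_sub_inv_pow_le_exp hk _ _
    _ ≤ Real.exp (-Real.log (Real.log (maxDensity G))) := by
        rw [hm, Real.exp_le_exp]
        exact mul_log_sub_div_le_neg_log_log hL1 (by positivity) hk2 hv
    _ = (Real.log (maxDensity G))⁻¹ := by rw [Real.exp_neg, Real.exp_log (by positivity)]
    _ ≤ ε := by
        rw [inv_le_comm₀ (by positivity) hε]
        refine le_trans ?_ hL
        rw [inv_eq_one_div]
        gcongr
        linarith [Real.add_one_le_exp 1]

/-- Let `ε > 0` and let `G` be a nonempty graph with `ρ(G) ≥ exp(e/ε)`. If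
`1 ≤ k ≤ ρ(G)/ln ρ(G)`, then `G` is `k`-DP-colorable with probability at most `ε`. -/
theorem statement_0 (ε : ℝ) (hε : 0 < ε) (n : ℕ) (hn : 0 < n)
    (G : SimpleGraph (Fin n)) (hρ : Real.exp (Real.exp 1 / ε) ≤ maxDensity G)
    (k : ℕ) (hk1 : 1 ≤ k)
    (hk2 : (k : ℝ) ≤ maxDensity G / Real.log (maxDensity G)) :
    probColorable G k 1 ≤ ε :=
  statement_0_general ε hε n G hρ k hk1 hk2

end DP
end

section
/- Let ε > 0 and let G be a nonempty finite simple graph with ρ(G) ≥ exp(e/ε). Let k be a real number with 1 ≤ k ≤ ρ(G)/ln ρ(G). Then for all positive integers a and b with a/b ≤ k, G is (a,b)-DP-colorable with probability at most ε. -/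
/-!
Let `H` be a densest subgraph of `G`, with `n'` vertices and `m' = ρ n'` edges. If `H_σ` has an
independent `b`-fold transversal, the `b`-sets `F v` of colours it uses at the vertices of `H`
satisfy `σ_e (F u) ∩ F w = ∅` for every edge `uw` of `H`. For fixed `F` these events are
independent, each of probability `C(a-b,b)/C(a,b) ≤ exp(-b²/a)`, so a union bound over the
`C(a,b)^n'` choices of `F`, together with `C(a,b) ≤ (e a/b)^b`, gives, for `t = a/b`,
`P ≤ exp(b n' (1 + log t - ρ/t))`. The hypotheses `t ≤ ρ/log ρ` and `log ρ ≥ e/ε` bound the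
bracket by `log ε < 0`.
-/

open Finset Equiv Real
open scoped Nat Pointwise

section PermsMapsTo
variable {α : Type*} [Fintype α] [DecidableEq α]

def permsMapsTo (S U : Finset α) : Finset (Perm α) := {σ | ∀ i ∈ S, σ i ∈ U}

lemma card_permsMapsTo_congr {S S' : Finset α} (h : #S = #S') (U : Finset α) :
    #(permsMapsTo S U) = #(permsMapsTo S' U) := by
  have := Set.powersetCard.isPretransitive (α := α) (n := #S')
  obtain ⟨τ, hτ⟩ := MulAction.exists_smul_eq (Perm α)
    (⟨S', rfl⟩ : Set.powersetCard α #S') ⟨S, h⟩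
  have hτS' : τ • S' = S := by simpa using congrArg Subtype.val hτ
  have hτS : ∀ i, i ∈ S' ↔ τ i ∈ S := fun i => by
    rw [← hτS', ← Perm.smul_def, Finset.smul_mem_smul_finset_iff]
  refine card_bij' (fun σ _ => σ * τ) (fun σ _ => σ * τ⁻¹) ?_ ?_ ?_ ?_ <;>
    simp_all [permsMapsTo]

-- Double count the pairs `(σ, S')` with `#S' = #S` and `σ '' S' ⊆ U`; by
-- `card_permsMapsTo_congr` every `S'` contributes the same number of `σ`.
lemma card_permsMapsTo_mul_choose (S U : Finset α) :
    #(permsMapsTo S U) * (Fintype.card α).choose #S = (Fintype.card α)! * (#U).choose #S := by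
  set r : Perm α → Finset α → Prop := fun σ S' => ∀ i ∈ S', σ i ∈ U
  calc #(permsMapsTo S U) * (Fintype.card α).choose #S
      = ∑ S' ∈ powersetCard #S univ, #(permsMapsTo S' U) := by
        rw [sum_congr rfl fun S' hS' => card_permsMapsTo_congr (mem_powersetCard.mp hS').2 U,
          sum_const, card_powersetCard, Finset.card_univ, smul_eq_mul, mul_comm]
    _ = ∑ S' ∈ powersetCard #S univ, #(univ.bipartiteBelow r S') := rfl
    _ = ∑ σ : Perm α, #((powersetCard #S univ).bipartiteAbove r σ) :=
      (sum_card_bipartiteAbove_eq_sum_card_bipartiteBelow _).symm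
    _ = ∑ σ : Perm α, #(powersetCard #S (U.image σ.symm)) := sum_congr rfl fun σ _ => by
      congr 1
      ext S'
      simp [r, bipartiteAbove, subset_iff, Equiv.symm_apply_eq, and_comm]
    _ = (Fintype.card α)! * (#U).choose #S := by
      simp [card_powersetCard, card_image_of_injective _ (Equiv.injective _), Fintype.card_perm]

lemma card_permsMapsTo_div_factorial (S U : Finset α) :
    (#(permsMapsTo S U) : ℝ) / (Fintype.card α)! =
      ((#U).choose #S : ℝ) / (Fintype.card α).choose #S := by
  have hchoose : ((Fintype.card α).choose #S : ℝ) ≠ 0 :=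
    Nat.cast_ne_zero.mpr (Nat.choose_pos S.card_le_univ).ne'
  rw [div_eq_div_iff (by positivity) hchoose]
  exact_mod_cast (card_permsMapsTo_mul_choose S U).trans (mul_comm _ _)

end PermsMapsTo

lemma sub_sub_mul_le_sub_mul_sub (a b i : ℕ) : (a - b - i) * a ≤ (a - b) * (a - i) := by
  rw [Nat.sub_mul, Nat.mul_sub]
  exact Nat.sub_le_sub_left (by rw [mul_comm i]; exact Nat.mul_le_mul_right _ (Nat.sub_le a b)) _

lemma choose_sub_div_choose_le_exp (a b : ℕ) :
    ((a - b).choose b : ℝ) / a.choose b ≤ exp (-(b ^ 2 / a)) := by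
  rcases lt_or_ge a b with hab | hba
  · rw [Nat.choose_eq_zero_of_lt (by omega : a - b < b)]
    simp only [Nat.cast_zero, zero_div]
    positivity
  have hdesc : ((a - b).choose b : ℝ) / a.choose b =
      ∏ i ∈ range b, ((a - b - i : ℕ) : ℝ) / (a - i : ℕ) := by
    rw [prod_div_distrib, ← Nat.cast_prod, ← Nat.cast_prod, ← Nat.descFactorial_eq_prod_range,
      ← Nat.descFactorial_eq_prod_range, Nat.descFactorial_eq_factorial_mul_choose,
      Nat.descFactorial_eq_factorial_mul_choose, Nat.cast_mul, Nat.cast_mul,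
      mul_div_mul_left _ _ (by positivity)]
  have hterm : ∀ i ∈ range b, ((a - b - i : ℕ) : ℝ) / (a - i : ℕ) ≤ exp (-(b / a)) := by
    intro i hi
    have hia : i < a := (mem_range.mp hi).trans_le hba
    have ha : (0 : ℝ) < a := by exact_mod_cast (Nat.zero_le i).trans_lt hia
    calc ((a - b - i : ℕ) : ℝ) / (a - i : ℕ) ≤ 1 - b / a := by
          rw [div_le_iff₀ (by exact_mod_cast Nat.sub_pos_of_lt hia), one_sub_div ha.ne',
            div_mul_eq_mul_div, le_div_iff₀ ha, ← Nat.cast_sub hba]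
          exact_mod_cast sub_sub_mul_le_sub_mul_sub a b i
      _ ≤ exp (-(b / a)) := by linarith [add_one_le_exp (-(b / a : ℝ))]
  calc ((a - b).choose b : ℝ) / a.choose b ≤ ∏ _i ∈ range b, exp (-(b / a : ℝ)) := by
        rw [hdesc]
        exact prod_le_prod (fun i _ => by positivity) hterm
    _ = exp (-(b ^ 2 / a)) := by
        rw [prod_const, card_range, ← exp_nat_mul]
        ring_nf

lemma choose_le_exp_mul_div_pow (a : ℕ) {b : ℕ} (hb : 0 < b) :
    (a.choose b : ℝ) ≤ (exp 1 * a / b) ^ b := by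
  have hb' : (0 : ℝ) < b := by exact_mod_cast hb
  calc (a.choose b : ℝ) ≤ (a : ℝ) ^ b / b ! := Nat.choose_le_pow_div b a
    _ = ((a : ℝ) / b) ^ b * ((b : ℝ) ^ b / b !) := by
        rw [div_pow]; field_simp
    _ ≤ ((a : ℝ) / b) ^ b * exp b := by
        gcongr
        exact pow_div_factorial_le_exp _ hb'.le b
    _ = (exp 1 * a / b) ^ b := by
        rw [mul_div_assoc, mul_pow, ← exp_nat_mul, mul_one, mul_comm]

lemma choose_pow_mul_ratio_pow_le_exp {a b : ℕ} (ha : 0 < a) (hb : 0 < b) (p q : ℕ) :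
    (a.choose b : ℝ) ^ p * (((a - b).choose b : ℝ) / a.choose b) ^ q ≤
      exp (b * p * (1 + log (a / b)) - b ^ 2 / a * q) := by
  have hab : (0 : ℝ) < a / b := by positivity
  have hchoose : (a.choose b : ℝ) ^ p ≤ exp (b * p * (1 + log (a / b))) := calc
    (a.choose b : ℝ) ^ p ≤ ((exp 1 * a / b) ^ b) ^ p := by
      gcongr
      exact choose_le_exp_mul_div_pow a hb
    _ = exp (b * p * (1 + log (a / b))) := by
      rw [← pow_mul, mul_div_assoc, ← exp_log hab, ← exp_add, ← exp_nat_mul, log_exp]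
      push_cast
      ring_nf
  have hratio : (((a - b).choose b : ℝ) / a.choose b) ^ q ≤ exp (-(b ^ 2 / a * q)) := calc
    _ ≤ exp (-(b ^ 2 / a)) ^ q := by
      gcongr
      exact choose_sub_div_choose_le_exp a b
    _ = exp (-(b ^ 2 / a * q)) := by
      rw [← exp_nat_mul]
      ring_nf
  rw [sub_eq_add_neg, exp_add]
  exact mul_le_mul hchoose hratio (by positivity) (exp_pos _).le

lemma one_add_log_sub_div_le_log {ε ρ t : ℝ} (hε : 0 < ε) (hρ : exp (exp 1 / ε) ≤ ρ)
    (ht : 0 < t) (htρ : t ≤ ρ / log ρ) : 1 + log t - ρ / t ≤ log ε := by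
  have hlogρ : exp 1 / ε ≤ log ρ := by
    rw [le_log_iff_exp_le ((exp_pos _).trans_le hρ)]
    exact hρ
  have hlogρ_pos : 0 < log ρ := (by positivity : 0 < exp 1 / ε).trans_le hlogρ
  have hρ_pos : 0 < ρ := (exp_pos _).trans_le hρ
  have hρt : log ρ ≤ ρ / t := by
    rw [le_div_iff₀ ht]
    rw [le_div_iff₀ hlogρ_pos] at htρ
    linarith
  have hlogt : log t ≤ log ρ - log (log ρ) := by
    rw [← log_div hρ_pos.ne' hlogρ_pos.ne']
    exact log_le_log ht htρ
  have hloglog : 1 - log ε ≤ log (log ρ) := by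
    rw [← log_exp 1, ← log_div (exp_pos 1).ne' hε.ne']
    exact log_le_log (by positivity) hlogρ
  linarith

lemma exp_mul_le_of_le_log {c x ε : ℝ} (hc : 1 ≤ c) (hε : 0 < ε) (hε1 : ε < 1)
    (hx : x ≤ log ε) : exp (c * x) ≤ ε := by
  have hneg : x < 0 := hx.trans_lt (log_neg hε hε1)
  calc exp (c * x) ≤ exp x := exp_le_exp.mpr (by nlinarith)
    _ ≤ ε := (exp_le_exp.mpr hx).trans_eq (exp_log hε)

lemma Sym2.mk_inf_sup {α : Type*} [LinearOrder α] (e : Sym2 α) : s(e.inf, e.sup) = e :=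
  Sym2.sortEquiv.symm_apply_apply e

namespace DP

variable {V : Type*} {G : SimpleGraph V}

open Classical in
lemma card_filter_mem_edgeSet [Fintype V] (H : G.Subgraph) :
    #{e : G.edgeSet | (e : Sym2 V) ∈ H.edgeSet} = H.edgeSet.ncard := by
  rw [← Fintype.card_subtype, ← Nat.card_eq_fintype_card, ← Nat.card_coe_set_eq,
    Nat.card_congr (Equiv.subtypeSubtypeEquivSubtype fun hx => H.edgeSet_subset hx)]

lemma exists_subgraph_eq_maxDensity [Finite V] (G : SimpleGraph V) (hG : 0 < maxDensity G) :
    ∃ H : G.Subgraph, H.verts.Nonempty ∧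
      maxDensity G = (H.edgeSet.ncard : ℝ) / (H.verts.ncard : ℝ) := by
  set S := {d : ℝ | ∃ H : G.Subgraph, H.verts.Nonempty ∧
    d = (H.edgeSet.ncard : ℝ) / (H.verts.ncard : ℝ)}
  have hS : S.Nonempty := by
    by_contra hS
    rw [Set.not_nonempty_iff_eq_empty] at hS
    simp [maxDensity, S, hS] at hG
  have hfin : S.Finite := (Set.finite_range fun H : G.Subgraph =>
    (H.edgeSet.ncard : ℝ) / (H.verts.ncard : ℝ)).subset fun d ⟨H, _, hd⟩ => ⟨H, hd.symm⟩
  exact hS.csSup_mem hfin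

variable [LinearOrder V]

lemma adj_inf_sup {e : Sym2 V} (he : e ∈ G.edgeSet) : G.Adj e.inf e.sup := by
  rwa [← SimpleGraph.mem_edgeSet, Sym2.mk_inf_sup]

lemma inf_lt_sup_of_mem_edgeSet {e : Sym2 V} (he : e ∈ G.edgeSet) : e.inf < e.sup :=
  e.inf_le_sup.lt_of_ne (adj_inf_sup he).ne

lemma card_filter_prodMk_mem {ι : Type*} [Fintype ι] [DecidableEq ι] (T : Finset (V × ι))
    (v : V) :
    #{i | (v, i) ∈ T} = #(T.filter fun p => p.1 = v) := by
  rw [← card_image_of_injective _ (Prod.mk_right_injective v)]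
  congr 1
  ext ⟨w, i⟩
  aesop

variable [Fintype V]

open Classical in
noncomputable def listAssignments (H : G.Subgraph) (a b : ℕ) : Finset (V → Finset (Fin a)) :=
  Fintype.piFinset fun v => if v ∈ H.verts then powersetCard b univ else {∅}

open Classical in
noncomputable def edgeConstraint (H : G.Subgraph) {a : ℕ} (F : V → Finset (Fin a))
    (e : G.edgeSet) : Finset (Perm (Fin a)) :=
  if (e : Sym2 V) ∈ H.edgeSet then permsMapsTo (F e.1.inf) (F e.1.sup)ᶜ else univ

lemma card_listAssignments (H : G.Subgraph) (a b : ℕ) :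
    #(listAssignments H a b) = a.choose b ^ H.verts.ncard := by
  classical
  simp only [listAssignments, Fintype.card_piFinset, apply_ite card, card_powersetCard,
    card_singleton, card_univ, Fintype.card_fin]
  rw [prod_ite, prod_const, prod_const_one, mul_one]
  simp [Set.ncard_eq_toFinset_card']

lemma card_of_mem_listAssignments {H : G.Subgraph} {a b : ℕ} {F : V → Finset (Fin a)}
    (hF : F ∈ listAssignments H a b) {v : V} (hv : v ∈ H.verts) : #(F v) = b := by
  have := Fintype.mem_piFinset.mp hF v
  rw [if_pos hv] at this
  exact (mem_powersetCard.mp this).2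

lemma exists_listAssignment_of_isIndepTransversal [DecidableRel G.Adj] (H : G.Subgraph)
    {a b : ℕ} {σ : G.edgeSet → Perm (Fin a)} {T : Finset (V × Fin a)}
    (hT : IsIndepTransversal G a b σ T) :
    ∃ F ∈ listAssignments H a b, σ ∈ Fintype.piFinset (edgeConstraint H F) := by
  classical
  refine ⟨fun v => if v ∈ H.verts then univ.filter fun i => (v, i) ∈ T else ∅, ?_, ?_⟩
  · refine Fintype.mem_piFinset.mpr fun v => ?_
    split_ifs
    · exact mem_powersetCard.mpr ⟨subset_univ _, (card_filter_prodMk_mem T v).trans (hT.1 v)⟩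
    · exact mem_singleton_self _
  · refine Fintype.mem_piFinset.mpr fun e => ?_
    unfold edgeConstraint
    split_ifs with he
    · have hHadj : H.Adj e.1.inf e.1.sup := by
        rwa [← SimpleGraph.Subgraph.mem_edgeSet, Sym2.mk_inf_sup]
      simp only [permsMapsTo, mem_filter, mem_univ, true_and, mem_compl, if_pos (H.edge_vert hHadj),
        if_pos (H.edge_vert hHadj.symm)]
      intro i hi hσi
      refine hT.2 _ hi _ hσi ⟨adj_inf_sup e.2, Or.inl ⟨inf_lt_sup_of_mem_edgeSet e.2, ?_⟩⟩
      simp only [Sym2.mk_inf_sup]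
    · exact mem_univ _

open Classical in
lemma card_edgeConstraint_div_factorial {H : G.Subgraph} {a b : ℕ} {F : V → Finset (Fin a)}
    (hF : F ∈ listAssignments H a b) (e : G.edgeSet) :
    (#(edgeConstraint H F e) : ℝ) / a ! =
      if (e : Sym2 V) ∈ H.edgeSet then ((a - b).choose b : ℝ) / a.choose b else 1 := by
  unfold edgeConstraint
  split_ifs with he
  · have hHadj : H.Adj e.1.inf e.1.sup := by
      rwa [← SimpleGraph.Subgraph.mem_edgeSet, Sym2.mk_inf_sup]
    have := card_permsMapsTo_div_factorial (F e.1.inf) (F e.1.sup)ᶜ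
    rwa [card_compl, Fintype.card_fin, card_of_mem_listAssignments hF (H.edge_vert hHadj),
      card_of_mem_listAssignments hF (H.edge_vert hHadj.symm)] at this
  · rw [card_univ, Fintype.card_perm, Fintype.card_fin, div_self (by positivity)]

lemma probColorable_le_s4 (G : SimpleGraph V) (H : G.Subgraph) (a b : ℕ) :
    probColorable G a b ≤
      (a.choose b : ℝ) ^ H.verts.ncard *
        (((a - b).choose b : ℝ) / a.choose b) ^ H.edgeSet.ncard := by
  classical
  set r : ℝ := ((a - b).choose b : ℝ) / a.choose b
  have hcover : (univ.filter fun σ : G.edgeSet → Perm (Fin a) =>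
      ∃ T, IsIndepTransversal G a b σ T) ⊆
      (listAssignments H a b).biUnion fun F => Fintype.piFinset (edgeConstraint H F) := by
    intro σ hσ
    obtain ⟨T, hT⟩ := (mem_filter.mp hσ).2
    exact mem_biUnion.mpr (exists_listAssignment_of_isIndepTransversal H hT)
  have hF : ∀ F ∈ listAssignments H a b,
      (#(Fintype.piFinset (edgeConstraint H F)) : ℝ) / (a ! : ℝ) ^ G.edgeSet.ncard =
        r ^ H.edgeSet.ncard := by
    intro F hF
    have hm : G.edgeSet.ncard = #(univ : Finset G.edgeSet) := by
      rw [card_univ, ← Nat.card_eq_fintype_card, Nat.card_coe_set_eq]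
    rw [Fintype.card_piFinset, Nat.cast_prod, hm, ← prod_const, ← prod_div_distrib,
      prod_congr rfl fun e _ => card_edgeConstraint_div_factorial hF e, ← prod_filter, prod_const,
      card_filter_mem_edgeSet]
  calc probColorable G a b
      = (#(univ.filter fun σ : G.edgeSet → Perm (Fin a) =>
          ∃ T, IsIndepTransversal G a b σ T) : ℝ) /
          (a ! : ℝ) ^ G.edgeSet.ncard := by
        rw [probColorable, Nat.card_eq_fintype_card, Fintype.card_subtype, Nat.card_fun,
          Nat.card_perm, Nat.card_fin, Nat.card_coe_set_eq]
        push_cast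
        rfl
    _ ≤ ∑ F ∈ listAssignments H a b,
          (#(Fintype.piFinset (edgeConstraint H F)) : ℝ) / (a ! : ℝ) ^ G.edgeSet.ncard := by
        rw [← sum_div]
        gcongr
        exact_mod_cast (card_le_card hcover).trans card_biUnion_le
    _ = _ := by
        rw [sum_congr rfl hF, sum_const, card_listAssignments, nsmul_eq_mul]
        push_cast
        rfl

lemma probColorable_le_one_s4 (G : SimpleGraph V) (a b : ℕ) : probColorable G a b ≤ 1 :=
  div_le_one_of_le₀ (by exact_mod_cast Finite.card_subtype_le _) (Nat.cast_nonneg _)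

theorem statement_4_general (ε : ℝ) (hε : 0 < ε) (n : ℕ)
    (G : SimpleGraph (Fin n)) (hρ : Real.exp (Real.exp 1 / ε) ≤ maxDensity G)
    (k : ℝ) (hk2 : k ≤ maxDensity G / Real.log (maxDensity G)) :
    ∀ a b : ℕ, 0 < a → 0 < b → (a : ℝ) / (b : ℝ) ≤ k →
      probColorable G a b ≤ ε := by
  intro a b ha hb habk
  rcases le_or_gt 1 ε with hε1 | hε1
  · exact (probColorable_le_one_s4 G a b).trans hε1
  obtain ⟨H, hH, hρH⟩ := exists_subgraph_eq_maxDensity G ((exp_pos _).trans_le hρ)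
  set ρ := maxDensity G
  have hverts : 0 < H.verts.ncard := (Set.ncard_pos H.verts.toFinite).mpr hH
  have hedges : (H.edgeSet.ncard : ℝ) = ρ * H.verts.ncard := by
    rw [hρH, div_mul_cancel₀ _ (by positivity)]
  have hx := one_add_log_sub_div_le_log hε hρ (by positivity) (habk.trans hk2)
  have hc : (1 : ℝ) ≤ b * H.verts.ncard := by exact_mod_cast Nat.mul_pos hb hverts
  calc probColorable G a b
      ≤ (a.choose b : ℝ) ^ H.verts.ncard *
          (((a - b).choose b : ℝ) / a.choose b) ^ H.edgeSet.ncard := probColorable_le_s4 G H a b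
    _ ≤ exp (b * H.verts.ncard * (1 + log (a / b)) - b ^ 2 / a * H.edgeSet.ncard) :=
        choose_pow_mul_ratio_pow_le_exp ha hb _ _
    _ = exp (b * H.verts.ncard * (1 + log (a / b) - ρ / (a / b))) := by
        rw [hedges]
        field_simp
    _ ≤ ε := exp_mul_le_of_le_log hc hε hε1 hx

/-- Let `ε > 0` and let `G` be a nonempty graph with `ρ(G) ≥ exp(e/ε)`. Let `k` be a
real number with `1 ≤ k ≤ ρ(G)/ln ρ(G)`. Then for all positive integers `a`, `b` with
`a/b ≤ k`, `G` is `(a,b)`-DP-colorable with probability at most `ε`. -/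
theorem statement_4 (ε : ℝ) (hε : 0 < ε) (n : ℕ) (hn : 0 < n)
    (G : SimpleGraph (Fin n)) (hρ : Real.exp (Real.exp 1 / ε) ≤ maxDensity G)
    (k : ℝ) (hk1 : 1 ≤ k) (hk2 : k ≤ maxDensity G / Real.log (maxDensity G)) :
    ∀ a b : ℕ, 0 < a → 0 < b → (a : ℝ) / (b : ℝ) ≤ k →
      probColorable G a b ≤ ε :=
  statement_4_general ε hε n G hρ k hk2

end DP
end

section
/- Let G be a finite simple graph with n vertices and m edges, and let a, b be integers with 1 ≤ b ≤ a. Then the expected number of independent b-fold transversals of the random a-fold cover of G equals C(a,b)^n · (C(a−b,b)/C(a,b))^m, where C(x,y) denotes the binomial coefficient (so C(a−b,b) = 0 when a < 2b). -/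
/-!
Write a `b`-fold transversal `T` as its family of fibres `S v ⊆ [a]`. Then `T` is independent in
`H_σ` exactly when, for every edge `uv` with `u < v`, the permutation `σ_uv` maps no element of
`S u` into `S v`; so the pairs `(σ, T)` number `∑_S ∏_{uv} N(S u, S v)`, where `N(A, B)` counts the
permutations of `[a]` mapping `A` off `B`. Composing with a permutation that carries `B` to `B'`
shows that `N(A, B)` depends on `B` only through `|B|`, and double counting the pairs `(π, B)`
with `|B| = k` and `π A ∩ B = ∅` gives `N(A, B) · C(a, k) = a! · C(a - |A|, k)`. Hence every edge
contributes the factor `a! · C(a - b, b) / C(a, b)`, and there are `C(a, b)^n` families `S`.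
-/

namespace DP

open Finset Equiv
open scoped Nat

section PermsAvoiding

variable {α : Type*} [Fintype α] [DecidableEq α]

def permsAvoiding (A B : Finset α) : Finset (Perm α) := {π | ∀ i ∈ A, π i ∉ B}

theorem card_permsAvoiding_eq_of_card_eq (A : Finset α) {B B' : Finset α} (h : #B = #B') :
    #(permsAvoiding A B) = #(permsAvoiding A B') := by
  obtain ⟨τ, rfl⟩ := Perm.exists_map_finset_eq B B' h
  refine card_bij' (fun π _ => τ * π) (fun π _ => τ⁻¹ * π) ?_ ?_ (by simp) (by simp)
  · simp [permsAvoiding]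
  · intro π hπ
    simp only [permsAvoiding, mem_filter, mem_univ, true_and, mem_map_equiv] at hπ ⊢
    simpa using hπ

theorem sum_card_permsAvoiding (A : Finset α) (k : ℕ) :
    ∑ B ∈ powersetCard k univ, #(permsAvoiding A B) =
      (Fintype.card α)! * (Fintype.card α - #A).choose k := by
  have hfiber (π : Perm α) : {B ∈ powersetCard k (univ : Finset α) | ∀ i ∈ A, π i ∉ B} =
      powersetCard k (A.map π.toEmbedding)ᶜ := by
    ext B
    simp only [mem_filter, mem_powersetCard, subset_univ, true_and,
      subset_compl_iff_disjoint_right, disjoint_left, mem_map_equiv]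
    grind
  calc ∑ B ∈ powersetCard k univ, #(permsAvoiding A B)
      = ∑ π : Perm α, #{B ∈ powersetCard k (univ : Finset α) | ∀ i ∈ A, π i ∉ B} := by
        simp only [permsAvoiding, card_filter]
        exact sum_comm
    _ = (Fintype.card α)! * (Fintype.card α - #A).choose k := by
        simp [hfiber, card_compl, Fintype.card_perm]

theorem card_permsAvoiding (A B : Finset α) :
    #(permsAvoiding A B) = (Fintype.card α - #A).choose #B * (#B)! * (Fintype.card α - #B)! := by
  have hB : #B ≤ Fintype.card α := card_le_univ B
  have hsum := sum_card_permsAvoiding A #B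
  rw [sum_congr rfl fun B' hB' => card_permsAvoiding_eq_of_card_eq A (mem_powersetCard.1 hB').2,
    sum_const, card_powersetCard, card_univ, smul_eq_mul,
    ← Nat.choose_mul_factorial_mul_factorial hB] at hsum
  refine Nat.eq_of_mul_eq_mul_left (Nat.choose_pos hB) ?_
  rw [hsum]
  ring

end PermsAvoiding

section FinsetProd

variable {V β : Type*} [Fintype V] [Fintype β] [DecidableEq β]

noncomputable def finsetProdEquivPi : Finset (V × β) ≃ (V → Finset β) where
  toFun T v := T.preimage (Prod.mk v) (Prod.mk_right_injective v).injOn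
  invFun S := {p | p.2 ∈ S p.1}
  left_inv T := by ext; simp
  right_inv S := by ext; simp

@[simp]
theorem mem_finsetProdEquivPi {T : Finset (V × β)} {v : V} {i : β} :
    i ∈ finsetProdEquivPi T v ↔ (v, i) ∈ T := by
  simp [finsetProdEquivPi]

theorem card_filter_fst_eq [DecidableEq V] (T : Finset (V × β)) (v : V) :
    #{p ∈ T | p.1 = v} = #(finsetProdEquivPi T v) := by
  have hfilter : {p ∈ T | p.1 = v} =
      (finsetProdEquivPi T v).map ⟨Prod.mk v, Prod.mk_right_injective v⟩ := by
    ext ⟨u, i⟩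
    simp only [mem_filter, mem_map, mem_finsetProdEquivPi, Function.Embedding.coeFn_mk,
      Prod.mk.injEq]
    grind
  rw [hfilter, card_map]

end FinsetProd

section Transversals

variable {V : Type*} [LinearOrder V] [Fintype V] {k : ℕ}

theorem forall_not_coverAdj_iff (G : SimpleGraph V) (σ : G.edgeSet → Perm (Fin k))
    (T : Finset (V × Fin k)) :
    (∀ p ∈ T, ∀ q ∈ T, ¬ coverAdj G k σ p q) ↔
      ∀ e, σ e ∈ permsAvoiding (finsetProdEquivPi T e.1.inf)
        (finsetProdEquivPi T e.1.sup) := by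
  simp only [permsAvoiding, mem_filter, mem_univ, true_and, mem_finsetProdEquivPi]
  constructor
  · rintro h ⟨e, he⟩ i hi hσi
    have hmk : s(e.inf, e.sup) = e := Sym2.sortEquiv.symm_apply_apply e
    have hadj : G.Adj e.inf e.sup := by rwa [← G.mem_edgeSet, hmk]
    have hedge : (⟨s(e.inf, e.sup), G.mem_edgeSet.mpr hadj⟩ : G.edgeSet) = ⟨e, he⟩ :=
      Subtype.ext hmk
    refine h _ hi _ hσi ⟨hadj, Or.inl ⟨lt_of_le_of_ne e.inf_le_sup hadj.ne, ?_⟩⟩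
    rw [hedge]
  · rintro h ⟨u, i⟩ hp ⟨v, j⟩ hq ⟨hadj, ⟨hlt, hσ⟩ | ⟨hlt, hσ⟩⟩
    · have := h ⟨s(u, v), G.mem_edgeSet.mpr hadj⟩
      simp only [Sym2.inf_mk, Sym2.sup_mk, inf_of_le_left hlt.le, sup_of_le_right hlt.le] at this
      exact this i hp (hσ ▸ hq)
    · have := h ⟨s(u, v), G.mem_edgeSet.mpr hadj⟩
      simp only [Sym2.inf_mk, Sym2.sup_mk, inf_of_le_right hlt.le, sup_of_le_left hlt.le] at this
      exact this j hq (hσ ▸ hp)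

theorem isIndepTransversal_iff (G : SimpleGraph V) (b : ℕ)
    (σ : G.edgeSet → Perm (Fin k)) (T : Finset (V × Fin k)) :
    IsIndepTransversal G k b σ T ↔ (∀ v, finsetProdEquivPi T v ∈ powersetCard b univ) ∧
      ∀ e, σ e ∈ permsAvoiding (finsetProdEquivPi T e.1.inf)
        (finsetProdEquivPi T e.1.sup) := by
  simp only [IsIndepTransversal, card_filter_fst_eq, mem_powersetCard, subset_univ, true_and,
    forall_not_coverAdj_iff]

theorem card_pairs_isIndepTransversal (G : SimpleGraph V) [Fintype G.edgeSet] (b : ℕ) :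
    Nat.card {x : (G.edgeSet → Perm (Fin k)) × Finset (V × Fin k) //
        IsIndepTransversal G k b x.1 x.2} =
      ∑ S ∈ Fintype.piFinset fun _ : V => powersetCard b (univ : Finset (Fin k)),
        ∏ e : G.edgeSet, #(permsAvoiding (S e.1.inf) (S e.1.sup)) := by
  classical
  let eqv : (G.edgeSet → Perm (Fin k)) × Finset (V × Fin k) ≃
      Σ _ : V → Finset (Fin k), G.edgeSet → Perm (Fin k) :=
    (Equiv.prodComm _ _).trans <|
      (Equiv.prodCongr finsetProdEquivPi (Equiv.refl _)).trans (Equiv.sigmaEquivProd _ _).symm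
  rw [Nat.card_eq_fintype_card, Fintype.card_subtype,
    card_equiv eqv (t := (Fintype.piFinset fun _ => powersetCard b univ).sigma fun S =>
      Fintype.piFinset fun e => permsAvoiding (S e.1.inf) (S e.1.sup))
      fun x => by simp [eqv, isIndepTransversal_iff],
    card_sigma]
  simp only [Fintype.card_piFinset]

end Transversals

theorem choose_mul_factorial_mul_factorial_div_factorial {K : Type*} [Field K] [CharZero K]
    (a b : ℕ) :
    ((a - b).choose b * b ! * (a - b)! : K) / a ! = (a - b).choose b / a.choose b := by
  rcases le_or_gt b a with hba | hab
  · rw [← Nat.choose_mul_factorial_mul_factorial hba]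
    have hfact : (b ! * (a - b)! : K) ≠ 0 := by norm_cast; positivity
    push_cast
    rw [mul_assoc, mul_assoc, mul_div_mul_right _ _ hfact]
  · -- both sides vanish, the right one through `x / 0 = 0`
    simp [Nat.choose_eq_zero_of_lt (show a - b < b by omega)]

theorem statement_7_general {n : ℕ} (G : SimpleGraph (Fin n)) (a b : ℕ) :
    (Nat.card {x : (G.edgeSet → Equiv.Perm (Fin a)) × Finset (Fin n × Fin a) //
        IsIndepTransversal G a b x.1 x.2} : ℝ) /
      (Nat.card (G.edgeSet → Equiv.Perm (Fin a)) : ℝ) =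
    (a.choose b : ℝ) ^ n *
      (((a - b).choose b : ℝ) / (a.choose b : ℝ)) ^ G.edgeSet.ncard := by
  classical
  have hedges (S : Fin n → Finset (Fin a))
      (hS : S ∈ Fintype.piFinset fun _ => powersetCard b (univ : Finset (Fin a))) :
      ∏ e : G.edgeSet, #(permsAvoiding (S e.1.inf) (S e.1.sup)) =
        ((a - b).choose b * b ! * (a - b)!) ^ G.edgeSet.ncard := by
    simp only [Fintype.mem_piFinset, mem_powersetCard] at hS
    simp [card_permsAvoiding, (hS _).2, ← Nat.card_coe_set_eq, Nat.card_eq_fintype_card]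
  rw [card_pairs_isIndepTransversal, sum_congr rfl hedges, sum_const, Fintype.card_piFinset,
    Nat.card_fun, Nat.card_perm, Nat.card_coe_set_eq]
  simp only [card_powersetCard, card_univ, Fintype.card_fin, prod_const, smul_eq_mul,
    Nat.card_eq_fintype_card]
  push_cast
  rw [mul_div_assoc, ← div_pow, choose_mul_factorial_mul_factorial_div_factorial]

/-- The expected number of independent `b`-fold transversals of the random `a`-fold
cover of a graph `G` with `n` vertices and `m` edges equals
`C(a,b)^n · (C(a-b,b)/C(a,b))^m`. -/
theorem statement_7 {n : ℕ} (G : SimpleGraph (Fin n)) (a b : ℕ)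
    (hb : 1 ≤ b) (hba : b ≤ a) :
    (Nat.card {x : (G.edgeSet → Equiv.Perm (Fin a)) × Finset (Fin n × Fin a) //
        IsIndepTransversal G a b x.1 x.2} : ℝ) /
      (Nat.card (G.edgeSet → Equiv.Perm (Fin a)) : ℝ) =
    (a.choose b : ℝ) ^ n *
      (((a - b).choose b : ℝ) / (a.choose b : ℝ)) ^ G.edgeSet.ncard :=
  statement_7_general G a b

end DP
end

section
/- Let a, b, k be integers with b ≥ 1, a ≥ 2b, and a ≤ k·b, and let ρ be a real number with ρ ≥ e and k ≤ ρ/ln ρ. Then ln C(a,b) + ρ · ln( C(a−b,b) / C(a,b) ) ≤ b·(1 − ln ln ρ), where C(x,y) denotes the binomial coefficient. -/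
/-!
Write `t = a / b ≤ k`. The crude bound `C(a,b) ≤ (e a / b)^b` gives `ln C(a,b) ≤ b (1 + ln t)`,
and comparing the two falling factorials factor by factor gives
`C(a-b,b) / C(a,b) ≤ (1 - b/a)^b`, whence `ln (C(a-b,b) / C(a,b)) ≤ -b / t`.
The left-hand side is therefore at most `b (1 + ln t - ρ / t)`, and `t ≤ ρ / ln ρ` gives both
`ln t ≤ ln ρ - ln ln ρ` and `ρ / t ≥ ln ρ`.
-/

open Real

namespace Nat

theorem descFactorial_mul_pow_le_of_le {m n : ℕ} (hmn : m ≤ n) (k : ℕ) :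
    m.descFactorial k * n ^ k ≤ n.descFactorial k * m ^ k := by
  induction k with
  | zero => simp
  | succ k ih =>
    have hfactor : (m - k) * n ≤ (n - k) * m := by
      rw [Nat.sub_mul, Nat.sub_mul, Nat.mul_comm n m]
      exact Nat.sub_le_sub_left (Nat.mul_le_mul_left k hmn) _
    calc m.descFactorial (k + 1) * n ^ (k + 1)
        = ((m - k) * n) * (m.descFactorial k * n ^ k) := by
          rw [descFactorial_succ, pow_succ]; ring
      _ ≤ ((n - k) * m) * (n.descFactorial k * m ^ k) := Nat.mul_le_mul hfactor ih
      _ = n.descFactorial (k + 1) * m ^ (k + 1) := by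
          rw [descFactorial_succ, pow_succ]; ring

theorem choose_sub_mul_pow_le (n k : ℕ) :
    (n - k).choose k * n ^ k ≤ n.choose k * (n - k) ^ k := by
  have h := descFactorial_mul_pow_le_of_le (Nat.sub_le n k) k
  rw [descFactorial_eq_factorial_mul_choose, descFactorial_eq_factorial_mul_choose,
    mul_assoc, mul_assoc] at h
  exact Nat.le_of_mul_le_mul_left h k.factorial_pos

theorem choose_le_exp_one_mul_div_pow (n k : ℕ) :
    (n.choose k : ℝ) ≤ (exp 1 * n / k) ^ k := by
  rcases k.eq_zero_or_pos with rfl | hk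
  · simp
  have hk' : (0 : ℝ) < k := mod_cast hk
  have hexp : (k : ℝ) ^ k ≤ exp k * k ! :=
    (div_le_iff₀ (mod_cast k.factorial_pos)).1 (Real.pow_div_factorial_le_exp _ hk'.le k)
  calc (n.choose k : ℝ) ≤ n ^ k / k ! := choose_le_pow_div k n
    _ ≤ n ^ k * exp k / k ^ k := by
        rw [div_le_div_iff₀ (mod_cast k.factorial_pos) (by positivity), mul_assoc]
        gcongr
    _ = (exp 1 * n / k) ^ k := by rw [div_pow, mul_pow, ← exp_one_pow]; ring

end Nat

theorem log_choose_le {n k : ℕ} (hk : 0 < k) (hkn : k ≤ n) :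
    log (n.choose k) ≤ k * (1 + log (n / k)) := by
  have hk' : (0 : ℝ) < k := mod_cast hk
  have hn : (0 : ℝ) < n := mod_cast hk.trans_le hkn
  calc log (n.choose k) ≤ log ((exp 1 * n / k) ^ k) :=
        log_le_log (mod_cast Nat.choose_pos hkn) (Nat.choose_le_exp_one_mul_div_pow n k)
    _ = k * (1 + log (n / k)) := by
        rw [log_pow, mul_div_assoc, log_mul (exp_ne_zero 1) (div_pos hn hk').ne', log_exp]

theorem log_choose_sub_div_choose_le {n k : ℕ} (hk : 0 < k) (hkn : 2 * k ≤ n) :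
    log (((n - k).choose k : ℝ) / n.choose k) ≤ -(k * (k / n)) := by
  have hn : (0 : ℝ) < n := by exact_mod_cast (by omega : 0 < n)
  have hsub : ((n - k : ℕ) : ℝ) = n - k := Nat.cast_sub (by omega)
  have hpos : (0 : ℝ) < ((n - k).choose k : ℝ) / n.choose k := by
    have := Nat.choose_pos (by omega : k ≤ n - k)
    have := Nat.choose_pos (by omega : k ≤ n)
    positivity
  have hratio : ((n - k).choose k : ℝ) / n.choose k ≤ (1 - k / n) ^ k := by
    have h : ((n - k).choose k : ℝ) * n ^ k ≤ n.choose k * (n - k) ^ k := by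
      rw [← hsub]; exact_mod_cast Nat.choose_sub_mul_pow_le n k
    rw [one_sub_div hn.ne', div_pow, div_le_div_iff₀ (mod_cast Nat.choose_pos (by omega))
      (by positivity), mul_comm _ ((n.choose k : ℕ) : ℝ)]
    exact h
  have hlog : log (1 - k / n) ≤ -(k / n) := by
    have : (0 : ℝ) < 1 - k / n := by
      rw [sub_pos, div_lt_one hn]; exact_mod_cast (by omega : k < n)
    linarith [log_le_sub_one_of_pos this]
  calc log (((n - k).choose k : ℝ) / n.choose k) ≤ log ((1 - k / n) ^ k) :=
        log_le_log hpos hratio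
    _ = k * log (1 - k / n) := log_pow _ _
    _ ≤ -(k * (k / n)) := by
        rw [← mul_neg]; exact mul_le_mul_of_nonneg_left hlog (Nat.cast_nonneg k)

theorem one_add_log_sub_div_le {t ρ : ℝ} (ht : 0 < t) (hρ : exp 1 ≤ ρ) (htρ : t ≤ ρ / log ρ) :
    1 + log t - ρ / t ≤ 1 - log (log ρ) := by
  have hρ0 : 0 < ρ := (exp_pos 1).trans_le hρ
  have hlogρ : 0 < log ρ := by
    linarith [(le_log_iff_exp_le hρ0).2 hρ]
  have hlogt : log t ≤ log ρ - log (log ρ) := by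
    rw [← log_div hρ0.ne' hlogρ.ne']; exact log_le_log ht htρ
  have hdiv : log ρ ≤ ρ / t := by
    rw [le_div_iff₀ ht, mul_comm, ← le_div_iff₀ hlogρ]; exact htρ
  linarith

/-- Let `a`, `b`, `k` be integers with `b ≥ 1`, `a ≥ 2b`, and `a ≤ k·b`, and let `ρ`
be a real number with `ρ ≥ e` and `k ≤ ρ/ln ρ`. Then
`ln C(a,b) + ρ·ln(C(a-b,b)/C(a,b)) ≤ b·(1 − ln ln ρ)`. -/
theorem statement_8 (a b k : ℕ) (hb : 1 ≤ b) (ha : 2 * b ≤ a) (hak : a ≤ k * b)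
    (ρ : ℝ) (hρ : Real.exp 1 ≤ ρ) (hk : (k : ℝ) ≤ ρ / Real.log ρ) :
    Real.log (a.choose b : ℝ) +
        ρ * Real.log (((a - b).choose b : ℝ) / (a.choose b : ℝ)) ≤
      (b : ℝ) * (1 - Real.log (Real.log ρ)) := by
  have hb' : (0 : ℝ) < b := mod_cast hb
  have ha' : (0 : ℝ) < a := by exact_mod_cast (by omega : 0 < a)
  have hρ0 : 0 < ρ := (exp_pos 1).trans_le hρ
  have htk : (a : ℝ) / b ≤ k := by
    rw [div_le_iff₀ hb']; exact_mod_cast hak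
  have hchoose := log_choose_le hb (by omega : b ≤ a)
  have hratio := mul_le_mul_of_nonneg_left (log_choose_sub_div_choose_le hb ha) hρ0.le
  have hmain := one_add_log_sub_div_le (div_pos ha' hb') hρ (htk.trans hk)
  calc log (a.choose b : ℝ) + ρ * log (((a - b).choose b : ℝ) / a.choose b)
      ≤ b * (1 + log (a / b)) + ρ * -(b * (b / a)) := add_le_add hchoose hratio
    _ = b * (1 + log (a / b) - ρ / (a / b)) := by field_simp; ring
    _ ≤ b * (1 - log (log ρ)) := mul_le_mul_of_nonneg_left hmain hb'.le
end

section
/- Let X_1, …, X_k be {0,1}-valued random variables on a probability space, set Y_i = 1 − X_i and X = X_1 + ⋯ + X_k. If the collection (Y_i)_{i∈[k]} is negatively correlated, then for every real t with 0 < t ≤ E[X], one has P(X < E[X] − t) < exp(−t² / (2·E[X])). -/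
open MeasureTheory

lemma exp_neg_lt_aux (x : ℝ) (hx : 0 < x) : Real.exp (-x) < 1 - x + x ^ 2 / 2 := by
  have h1 : 1 + x + x ^ 2 / 2 + x ^ 3 / 6 ≤ Real.exp x := by
    have h := Real.sum_le_exp_of_nonneg hx.le 4
    have hs : (∑ i ∈ Finset.range 4, x ^ i / (Nat.factorial i)) = 1 + x + x ^ 2 / 2 + x ^ 3 / 6 := by
      simp [Finset.sum_range_succ, Nat.factorial]
    linarith [hs ▸ h]
  have hx3 : 0 < x ^ 3 := pow_pos hx 3
  have he : Real.exp (-x) * Real.exp x = 1 := by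
    rw [← Real.exp_add]; simp
  nlinarith [Real.exp_pos (-x), sq_nonneg (x - 1), sq_nonneg x, pow_pos hx 4]

lemma prod_indicator_aux {Ω : Type*} [MeasureSpace Ω]
    [IsProbabilityMeasure (volume : Measure Ω)] {k : ℕ} (X : Fin k → Ω → ℝ)
    (hmeas : ∀ i, Measurable (X i)) (h01 : ∀ i, ∀ ω, X i ω = 0 ∨ X i ω = 1)
    (I : Finset (Fin k)) :
    Integrable (fun ω => ∏ i ∈ I, (1 - X i ω)) ∧
    ∫ ω, ∏ i ∈ I, (1 - X i ω) = (volume {ω | ∀ i ∈ I, 1 - X i ω = 1}).toReal := by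
  have hSm : MeasurableSet {ω | ∀ i ∈ I, 1 - X i ω = 1} := by
    have hset : {ω | ∀ i ∈ I, 1 - X i ω = 1} = ⋂ i ∈ I, {ω | X i ω = 0} := by
      ext ω
      simp only [Set.mem_setOf_eq, Set.mem_iInter]
      constructor
      · intro h i hi; have := h i hi; linarith
      · intro h i hi; have := h i hi; linarith
    rw [hset]
    exact MeasurableSet.biInter I.countable_toSet
      (fun i _ => (hmeas i) (measurableSet_singleton 0))
  have heq : (fun ω => ∏ i ∈ I, (1 - X i ω))
      = Set.indicator {ω | ∀ i ∈ I, 1 - X i ω = 1} (fun _ => (1 : ℝ)) := by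
    funext ω
    by_cases h : ∀ i ∈ I, 1 - X i ω = 1
    · rw [Set.indicator_of_mem (show ω ∈ {ω | ∀ i ∈ I, 1 - X i ω = 1} from h)]
      exact Finset.prod_eq_one h
    · rw [Set.indicator_of_notMem (show ω ∉ {ω | ∀ i ∈ I, 1 - X i ω = 1} from h)]
      push_neg at h
      obtain ⟨i, hi, hne⟩ := h
      refine Finset.prod_eq_zero hi ?_
      rcases h01 i ω with h0 | h0
      · exfalso; apply hne; rw [h0]; ring
      · rw [h0]; ring
  constructor
  · rw [heq]
    exact (integrable_const (1 : ℝ)).indicator hSm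
  · rw [heq]
    exact integral_indicator_one hSm

/-- Chernoff–Hoeffding bound for sums of `{0,1}`-valued random variables whose
complements are negatively correlated: if `Y i = 1 - X i` and for every `I ⊆ [k]`,
`P(⋂_{i ∈ I} {Y i = 1}) ≤ ∏_{i ∈ I} P(Y i = 1)`, then for `0 < t ≤ E[X]` with
`X = ∑ i, X i`, we have `P(X < E[X] - t) < exp(-t²/(2·E[X]))`. -/
theorem statement_10 {Ω : Type*} [MeasureSpace Ω]
    [IsProbabilityMeasure (volume : Measure Ω)]
    (k : ℕ) (X : Fin k → Ω → ℝ)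
    (hmeas : ∀ i, Measurable (X i))
    (h01 : ∀ i, ∀ ω, X i ω = 0 ∨ X i ω = 1)
    (hneg : ∀ I : Finset (Fin k),
      (volume {ω : Ω | ∀ i ∈ I, 1 - X i ω = 1}).toReal ≤
        ∏ i ∈ I, (volume {ω : Ω | 1 - X i ω = 1}).toReal)
    (t : ℝ) (ht : 0 < t) (htE : t ≤ ∫ ω, (∑ i, X i ω)) :
    (volume {ω : Ω | (∑ i, X i ω) < (∫ ω', (∑ i, X i ω')) - t}).toReal <
      Real.exp (-t ^ 2 / (2 * ∫ ω, (∑ i, X i ω))) := by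
  classical
  set μr : ℝ := ∫ ω, (∑ i, X i ω) with hμr
  have hμpos : 0 < μr := lt_of_lt_of_le ht htE
  -- basic integrability facts
  have hXint : ∀ i, Integrable (X i) := by
    intro i
    refine (integrable_const (1 : ℝ)).mono' (hmeas i).aestronglyMeasurable ?_
    filter_upwards with ω
    rcases h01 i ω with h0 | h0 <;> simp [h0]
  have hp_mem : ∀ i, 0 ≤ ∫ ω, X i ω ∧ ∫ ω, X i ω ≤ 1 := by
    intro i
    constructor
    · exact integral_nonneg (fun ω => by rcases h01 i ω with h0 | h0 <;> simp [h0])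
    · calc ∫ ω, X i ω ≤ ∫ _ω, (1 : ℝ) := by
            refine integral_mono (hXint i) (integrable_const 1) ?_
            intro ω; rcases h01 i ω with h0 | h0 <;> simp [h0]
        _ = 1 := by simp
  have hμ_sum : μr = ∑ i, ∫ ω, X i ω := by
    rw [hμr]; exact integral_finset_sum _ (fun i _ => hXint i)
  -- the parameter
  set s : ℝ := -(t / μr) with hs
  have hx_pos : 0 < t / μr := div_pos ht hμpos
  have hs_neg : s < 0 := by simp [hs]; exact hx_pos
  have hes_lt_one : Real.exp s < 1 := Real.exp_lt_one_iff.mpr hs_neg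
  have hc_nonneg : (0 : ℝ) ≤ 1 - Real.exp s := by linarith
  -- q i and its relation with p i
  have hq : ∀ i, (volume {ω : Ω | 1 - X i ω = 1}).toReal = 1 - ∫ ω, X i ω := by
    intro i
    have h := (prod_indicator_aux X hmeas h01 {i}).2
    have hset : {ω : Ω | ∀ j ∈ ({i} : Finset (Fin k)), 1 - X j ω = 1}
        = {ω : Ω | 1 - X i ω = 1} := by
      ext ω; simp
    rw [hset] at h
    rw [← h]
    simp only [Finset.prod_singleton]
    rw [integral_sub (integrable_const 1) (hXint i)]
    simp
  -- pointwise product formula for exp(s * ∑ X)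
  have hexp_eq : ∀ ω, Real.exp (s * ∑ i, X i ω)
      = ∏ i : Fin k, ((1 - Real.exp s) * (1 - X i ω) + Real.exp s) := by
    intro ω
    rw [Finset.mul_sum, Real.exp_sum]
    refine Finset.prod_congr rfl fun i _ => ?_
    rcases h01 i ω with h0 | h0 <;> simp [h0]
  -- key bound on the mgf
  have key : ∫ ω, Real.exp (s * ∑ i, X i ω)
      ≤ ∏ i : Fin k,
          ((1 - Real.exp s) * (volume {ω : Ω | 1 - X i ω = 1}).toReal + Real.exp s) := by
    have hrw : (fun ω => Real.exp (s * ∑ i, X i ω))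
        = fun ω => ∑ I ∈ (Finset.univ : Finset (Fin k)).powerset,
            ((∏ _i ∈ I, (1 - Real.exp s)) * (∏ _i ∈ Finset.univ \ I, Real.exp s))
              * ∏ i ∈ I, (1 - X i ω) := by
      funext ω
      rw [hexp_eq ω, Finset.prod_add]
      refine Finset.sum_congr rfl fun I _ => ?_
      rw [Finset.prod_mul_distrib]
      ring
    rw [hrw, integral_finset_sum _
      (fun I _ => ((prod_indicator_aux X hmeas h01 I).1.const_mul _))]
    rw [Finset.prod_add]
    refine Finset.sum_le_sum fun I _ => ?_
    rw [integral_const_mul, Finset.prod_mul_distrib]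
    have hA : (0 : ℝ) ≤ ∏ _i ∈ I, (1 - Real.exp s) :=
      Finset.prod_nonneg fun _ _ => hc_nonneg
    have hC : (0 : ℝ) ≤ ∏ _i ∈ Finset.univ \ I, Real.exp s :=
      Finset.prod_nonneg fun _ _ => (Real.exp_pos s).le
    have hE : ∫ ω, ∏ i ∈ I, (1 - X i ω)
        ≤ ∏ i ∈ I, (volume {ω : Ω | 1 - X i ω = 1}).toReal :=
      (prod_indicator_aux X hmeas h01 I).2 ▸ hneg I
    calc ((∏ _i ∈ I, (1 - Real.exp s)) * ∏ _i ∈ Finset.univ \ I, Real.exp s)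
          * ∫ ω, ∏ i ∈ I, (1 - X i ω)
        ≤ ((∏ _i ∈ I, (1 - Real.exp s)) * ∏ _i ∈ Finset.univ \ I, Real.exp s)
          * ∏ i ∈ I, (volume {ω : Ω | 1 - X i ω = 1}).toReal :=
          mul_le_mul_of_nonneg_left hE (mul_nonneg hA hC)
      _ = ((∏ _i ∈ I, (1 - Real.exp s))
            * ∏ i ∈ I, (volume {ω : Ω | 1 - X i ω = 1}).toReal)
          * ∏ _i ∈ Finset.univ \ I, Real.exp s := by ring
  -- bound the product by exp((e^s - 1) μ)
  have hfac : ∀ i : Fin k,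
      (1 - Real.exp s) * (volume {ω : Ω | 1 - X i ω = 1}).toReal + Real.exp s
        ≤ Real.exp ((Real.exp s - 1) * ∫ ω, X i ω) := by
    intro i
    rw [hq i]
    have := Real.add_one_le_exp ((Real.exp s - 1) * ∫ ω, X i ω)
    linarith
  have hfac_nonneg : ∀ i : Fin k,
      0 ≤ (1 - Real.exp s) * (volume {ω : Ω | 1 - X i ω = 1}).toReal + Real.exp s := by
    intro i
    have : (0 : ℝ) ≤ (volume {ω : Ω | 1 - X i ω = 1}).toReal := ENNReal.toReal_nonneg
    nlinarith [Real.exp_pos s]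
  have key2 : ∫ ω, Real.exp (s * ∑ i, X i ω) ≤ Real.exp ((Real.exp s - 1) * μr) := by
    calc ∫ ω, Real.exp (s * ∑ i, X i ω)
        ≤ ∏ i : Fin k,
            ((1 - Real.exp s) * (volume {ω : Ω | 1 - X i ω = 1}).toReal + Real.exp s) := key
      _ ≤ ∏ i : Fin k, Real.exp ((Real.exp s - 1) * ∫ ω, X i ω) :=
          Finset.prod_le_prod (fun i _ => hfac_nonneg i) (fun i _ => hfac i)
      _ = Real.exp ((Real.exp s - 1) * μr) := by
          rw [← Real.exp_sum, hμ_sum, Finset.mul_sum]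
  -- Markov's inequality
  have hsum_meas : Measurable fun ω => ∑ i, X i ω :=
    Finset.measurable_sum _ (fun i _ => hmeas i)
  have hf_meas : Measurable fun ω => Real.exp (s * ∑ i, X i ω) :=
    Real.measurable_exp.comp (hsum_meas.const_mul s)
  have hf_int : Integrable (fun ω => Real.exp (s * ∑ i, X i ω)) := by
    refine (integrable_const (1 : ℝ)).mono' hf_meas.aestronglyMeasurable ?_
    filter_upwards with ω
    rw [Real.norm_eq_abs, abs_of_pos (Real.exp_pos _), Real.exp_le_one_iff]
    have hsum_nonneg : (0 : ℝ) ≤ ∑ i, X i ω :=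
      Finset.sum_nonneg fun i _ => by rcases h01 i ω with h0 | h0 <;> simp [h0]
    exact mul_nonpos_of_nonpos_of_nonneg hs_neg.le hsum_nonneg
  set ε : ℝ := Real.exp (s * (μr - t)) with hε
  have hε_pos : 0 < ε := Real.exp_pos _
  have hsub : {ω : Ω | (∑ i, X i ω) < μr - t}
      ⊆ {ω : Ω | ε ≤ Real.exp (s * ∑ i, X i ω)} := by
    intro ω hω
    simp only [Set.mem_setOf_eq] at hω ⊢
    have : s * (μr - t) < s * ∑ i, X i ω := mul_lt_mul_of_neg_left hω hs_neg
    exact (Real.exp_le_exp.mpr this.le)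
  have hP_le : (volume {ω : Ω | (∑ i, X i ω) < μr - t}).toReal
      ≤ (volume {ω : Ω | ε ≤ Real.exp (s * ∑ i, X i ω)}).toReal :=
    ENNReal.toReal_mono (measure_ne_top _ _) (measure_mono hsub)
  have hmarkov := mul_meas_ge_le_integral_of_nonneg
    (μ := (volume : Measure Ω))
    (Filter.Eventually.of_forall fun ω => (Real.exp_pos (s * ∑ i, X i ω)).le) hf_int ε
  -- final strict comparison
  have hfinal : Real.exp ((Real.exp s - 1) * μr)
      < ε * Real.exp (-t ^ 2 / (2 * μr)) := by
    rw [hε, ← Real.exp_add, Real.exp_lt_exp]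
    have hxlt := exp_neg_lt_aux (t / μr) hx_pos
    have hes : Real.exp s = Real.exp (-(t / μr)) := by rw [hs]
    rw [hes]
    have hμne : μr ≠ 0 := ne_of_gt hμpos
    have h1 : (Real.exp (-(t / μr)) - 1) * μr < (- (t / μr) + (t / μr) ^ 2 / 2) * μr := by
      apply mul_lt_mul_of_pos_right _ hμpos
      linarith
    have h2 : (- (t / μr) + (t / μr) ^ 2 / 2) * μr = -t + t ^ 2 / (2 * μr) := by
      field_simp
    have h3 : (-(t / μr)) * (μr - t) = -t + t ^ 2 / μr := by
      field_simp; ring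
    rw [h3]
    have h4 : t ^ 2 / μr - t ^ 2 / (2 * μr) = t ^ 2 / (2 * μr) := by
      field_simp; ring
    have h5 : -t ^ 2 / (2 * μr) = -(t ^ 2 / (2 * μr)) := by ring
    linarith [h1, h2, h4, h5]
  -- put everything together
  have hchain : ε * (volume {ω : Ω | (∑ i, X i ω) < μr - t}).toReal
      < ε * Real.exp (-t ^ 2 / (2 * μr)) := by
    calc ε * (volume {ω : Ω | (∑ i, X i ω) < μr - t}).toReal
        ≤ ε * (volume {ω : Ω | ε ≤ Real.exp (s * ∑ i, X i ω)}).toReal :=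
          mul_le_mul_of_nonneg_left hP_le hε_pos.le
      _ ≤ ∫ ω, Real.exp (s * ∑ i, X i ω) := hmarkov
      _ ≤ Real.exp ((Real.exp s - 1) * μr) := key2
      _ < ε * Real.exp (-t ^ 2 / (2 * μr)) := hfinal
  exact lt_of_mul_lt_mul_left hchain hε_pos.le
end

section
/- Let a, b, t be positive integers with b ≤ a, let S_1, …, S_t be independent random sets each chosen uniformly at random among all b-element subsets of [a] = {1,…,a}, and let S = S_1 ∪ ⋯ ∪ S_t. Then the indicator random variables of the events {j ∈ S} for j ∈ [a] are negatively correlated; that is, for every subset I ⊆ [a], P(I ⊆ S) ≤ ∏_{j∈I} P(j ∈ S). -/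
namespace DP

/-- A `b`-element subset of `[a] = {1, …, a}`. -/
def BSubset (a b : ℕ) : Type := {s : Finset (Fin a) // s.card = b}

/-- The probability of an event about a uniformly random tuple `(S_1, …, S_t)` of
`b`-element subsets of `[a]`: the fraction of tuples for which the event holds. -/
noncomputable def tupleProb (a b t : ℕ) (P : (Fin t → BSubset a b) → Prop) : ℝ :=
  (Nat.card {f : Fin t → BSubset a b // P f} : ℝ) /
    (Nat.card (Fin t → BSubset a b) : ℝ)


open Finset

variable {a b t : ℕ}


def cnt (a b t : ℕ) (V I : Finset (Fin a)) : ℕ :=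
  (univ.filter (fun f : Fin t → Finset (Fin a) =>
    (∀ r, f r ⊆ V ∧ (f r).card = b) ∧ ∀ j ∈ I, ∃ r, j ∈ f r)).card

lemma cnt_empty (V : Finset (Fin a)) : cnt a b t V ∅ = (V.card.choose b) ^ t := by
  have h : (univ.filter (fun f : Fin t → Finset (Fin a) =>
      (∀ r, f r ⊆ V ∧ (f r).card = b) ∧ ∀ j ∈ (∅ : Finset (Fin a)), ∃ r, j ∈ f r))
      = Fintype.piFinset (fun _ : Fin t => V.powersetCard b) := by
    ext f
    simp [Fintype.mem_piFinset, Finset.mem_powersetCard]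
  rw [cnt, h, Fintype.card_piFinset]
  simp [Finset.card_powersetCard]

lemma cnt_split (V I : Finset (Fin a)) (j : Fin a) (hj : j ∉ I) :
    cnt a b t V I = cnt a b t V (insert j I) + cnt a b t (V.erase j) I := by
  classical
  rw [cnt, ← Finset.card_filter_add_card_filter_not
     (p := fun f : Fin t → Finset (Fin a) => ∃ r, j ∈ f r)]
  congr 1
  · rw [Finset.filter_filter, cnt]
    apply congrArg Finset.card
    apply Finset.filter_congr
    intro f _
    simp only [Finset.forall_mem_insert]
    tauto
  · rw [Finset.filter_filter, cnt]
    apply congrArg Finset.card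
    apply Finset.filter_congr
    intro f _
    simp only [Finset.subset_erase, not_exists]
    constructor
    · rintro ⟨⟨hv, hc⟩, hnj⟩
      exact ⟨fun r => ⟨⟨(hv r).1, hnj r⟩, (hv r).2⟩, hc⟩
    · rintro ⟨hv, hc⟩
      exact ⟨⟨fun r => ⟨(hv r).1.1, (hv r).2⟩, hc⟩, fun r => (hv r).1.2⟩


variable {a b t : ℕ}

def w (a b : ℕ) (V : Finset (Fin a)) (j : Fin a) (U T : Finset (Fin a)) : ℕ :=
  if U ⊆ V ∧ U.card = b then
    if j ∈ U then (if U.erase j ⊆ T ∧ T ⊆ V.erase j ∧ T.card = b then 1 else 0)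
    else (V.card - b) * (if T = U then 1 else 0)
  else 0

lemma w_row (V : Finset (Fin a)) (j : Fin a) (hb : 0 < b) (U : Finset (Fin a))
    (hU : U ⊆ V) (hcard : U.card = b) :
    ∑ T : Finset (Fin a), w a b V j U T = V.card - b := by
  classical
  by_cases hjU : j ∈ U
  · simp only [w, if_pos (And.intro hU hcard), if_pos hjU]
    rw [Finset.sum_boole]
    norm_cast
    have hbV : b ≤ V.card := hcard ▸ Finset.card_le_card hU
    have hkey : ((V.erase j) \ (U.erase j)).card
        = (univ.filter (fun T : Finset (Fin a) =>
            U.erase j ⊆ T ∧ T ⊆ V.erase j ∧ T.card = b)).card := by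
      apply Finset.card_bij (fun x _ => insert x (U.erase j))
      · intro x hx
        rw [Finset.mem_sdiff] at hx
        simp only [Finset.mem_filter, Finset.mem_univ, true_and]
        refine ⟨Finset.subset_insert _ _, Finset.insert_subset hx.1
          (Finset.erase_subset_erase _ hU), ?_⟩
        rw [Finset.card_insert_of_notMem hx.2, Finset.card_erase_of_mem hjU, hcard]
        omega
      · intro x hx y hy hxy
        rw [Finset.mem_sdiff] at hx hy
        have := hxy ▸ Finset.mem_insert_self x (U.erase j)
        rcases Finset.mem_insert.mp this with h | h
        · exact h
        · exact absurd h hx.2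
      · intro T hT
        rw [Finset.mem_filter] at hT
        obtain ⟨-, hAT, hTV, hTc⟩ := hT
        have hcA : (U.erase j).card = b - 1 := by
          rw [Finset.card_erase_of_mem hjU, hcard]
        have h1 : (T \ (U.erase j)).card = 1 := by
          rw [Finset.card_sdiff_of_subset hAT, hTc, hcA]; omega
        obtain ⟨x, hx⟩ := Finset.card_eq_one.mp h1
        have hxmem : x ∈ T \ (U.erase j) := hx ▸ Finset.mem_singleton_self x
        rw [Finset.mem_sdiff] at hxmem
        refine ⟨x, Finset.mem_sdiff.mpr ⟨hTV hxmem.1, hxmem.2⟩, ?_⟩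
        rw [Finset.insert_eq, ← hx, Finset.sdiff_union_of_subset hAT]
    rw [← hkey, Finset.card_sdiff_of_subset (Finset.erase_subset_erase _ hU)]
    by_cases hjV : j ∈ V
    · rw [Finset.card_erase_of_mem hjV, Finset.card_erase_of_mem hjU, hcard]
      omega
    · exact absurd (hU hjU) hjV
  · simp only [w, if_pos (And.intro hU hcard), if_neg hjU]
    rw [← Finset.mul_sum]
    rw [Finset.sum_ite_eq' Finset.univ U (fun _ => 1)]
    simp


variable {a b t : ℕ}

lemma w_col (V : Finset (Fin a)) (j : Fin a) (hb : 0 < b) (hj : j ∈ V)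
    (T : Finset (Fin a)) (hT : T ⊆ V.erase j) (hcard : T.card = b) :
    ∑ U : Finset (Fin a), w a b V j U T = V.card := by
  classical
  have hjT : j ∉ T := fun h => (Finset.mem_erase.mp (hT h)).1 rfl
  have hTV : T ⊆ V := hT.trans (Finset.erase_subset _ _)
  have hbV : b ≤ V.card := hcard ▸ Finset.card_le_card hTV
  have key : ∀ U : Finset (Fin a), w a b V j U T =
      (if U = T then V.card - b else 0) +
      (if j ∈ U ∧ U ⊆ V ∧ U.card = b ∧ U.erase j ⊆ T then 1 else 0) := by
    intro U
    by_cases hjU : j ∈ U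
    · have hne : U ≠ T := fun h => hjT (h ▸ hjU)
      by_cases hv : U ⊆ V ∧ U.card = b
      · simp only [w, if_pos hv, if_pos hjU, if_neg hne, zero_add]
        by_cases hA : U.erase j ⊆ T
        · rw [if_pos ⟨hA, hT, hcard⟩, if_pos ⟨hjU, hv.1, hv.2, hA⟩]
        · rw [if_neg (fun h => hA h.1), if_neg (fun h => hA h.2.2.2)]
      · simp only [w, if_neg hv, if_neg hne, zero_add]
        rw [if_neg (fun h => hv ⟨h.2.1, h.2.2.1⟩)]
    · have hno : ¬(j ∈ U ∧ U ⊆ V ∧ U.card = b ∧ U.erase j ⊆ T) := fun h => hjU h.1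
      rw [if_neg hno, add_zero]
      by_cases hUT : U = T
      · subst hUT
        simp only [w, if_pos (And.intro hTV hcard), if_neg hjU]
        simp
      · simp only [w, if_neg hjU]
        rw [if_neg (fun h : T = U => hUT h.symm)]
        simp [hUT]
  rw [Finset.sum_congr rfl (fun U _ => key U), Finset.sum_add_distrib]
  rw [Finset.sum_ite_eq' Finset.univ T (fun _ => V.card - b)]
  rw [Finset.sum_boole]
  norm_cast
  have hcnt : (univ.filter (fun U : Finset (Fin a) =>
      j ∈ U ∧ U ⊆ V ∧ U.card = b ∧ U.erase j ⊆ T)).card = b := by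
    rw [← hcard]
    symm
    apply Finset.card_bij (fun x _ => insert j (T.erase x))
    · intro x hx
      simp only [Finset.mem_filter, Finset.mem_univ, true_and]
      have hjTx : j ∉ T.erase x := fun h => hjT (Finset.erase_subset _ _ h)
      refine ⟨Finset.mem_insert_self _ _,
        Finset.insert_subset hj ((Finset.erase_subset _ _).trans hTV), ?_, ?_⟩
      · rw [Finset.card_insert_of_notMem hjTx, Finset.card_erase_of_mem hx, hcard]
        omega
      · rw [Finset.erase_insert hjTx]
        exact Finset.erase_subset _ _
    · intro x hx y hy hxy
      have hjx : j ∉ T.erase x := fun h => hjT (Finset.erase_subset _ _ h)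
      have hjy : j ∉ T.erase y := fun h => hjT (Finset.erase_subset _ _ h)
      have : T.erase x = T.erase y := by
        rw [← Finset.erase_insert hjx, ← Finset.erase_insert hjy, hxy]
      exact (Finset.erase_inj T hx).mp this
    · intro U hU
      rw [Finset.mem_filter] at hU
      obtain ⟨-, hjU, hUV, hUc, hAT⟩ := hU
      have hcA : (U.erase j).card = b - 1 := by
        rw [Finset.card_erase_of_mem hjU, hUc, hcard]
      have h1 : (T \ (U.erase j)).card = 1 := by
        rw [Finset.card_sdiff_of_subset hAT, hcard, hcA]; omega
      obtain ⟨x, hx⟩ := Finset.card_eq_one.mp h1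
      have hxmem : x ∈ T \ (U.erase j) := hx ▸ Finset.mem_singleton_self x
      rw [Finset.mem_sdiff] at hxmem
      refine ⟨x, hxmem.1, ?_⟩
      have hsub : U.erase j ⊆ T.erase x := Finset.subset_erase.mpr ⟨hAT, hxmem.2⟩
      have hceq : (T.erase x).card = (U.erase j).card := by
        rw [Finset.card_erase_of_mem hxmem.1, hcard, hcA]
      have : T.erase x = U.erase j :=
        (Finset.eq_of_subset_of_card_le hsub (le_of_eq hceq)).symm
      rw [this, Finset.insert_erase hjU]
  rw [hcnt]
  simp only [Finset.mem_univ, if_true]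
  omega



lemma cnt_step {a b t : ℕ} (V I : Finset (Fin a)) (j : Fin a)
    (hb : 0 < b) (hj : j ∈ V) (hjI : j ∉ I) :
    cnt a b t V I * (V.card - b) ^ t ≤ cnt a b t (V.erase j) I * V.card ^ t := by
  classical
  set S1 := univ.filter (fun f : Fin t → Finset (Fin a) =>
    (∀ r, f r ⊆ V ∧ (f r).card = b) ∧ ∀ i ∈ I, ∃ r, i ∈ f r) with hS1
  set S2 := univ.filter (fun g : Fin t → Finset (Fin a) =>
    (∀ r, g r ⊆ V.erase j ∧ (g r).card = b) ∧ ∀ i ∈ I, ∃ r, i ∈ g r) with hS2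
  have hrow : ∀ f ∈ S1, ∑ g : Fin t → Finset (Fin a), ∏ r, w a b V j (f r) (g r)
      = (V.card - b) ^ t := by
    intro f hf
    rw [hS1, Finset.mem_filter] at hf
    rw [← Fintype.piFinset_univ, ← Finset.prod_univ_sum]
    rw [Finset.prod_congr rfl (fun r _ => w_row V j hb (f r) (hf.2.1 r).1 (hf.2.1 r).2)]
    simp
  have hcol : ∀ g ∈ S2, ∑ f : Fin t → Finset (Fin a), ∏ r, w a b V j (f r) (g r)
      = V.card ^ t := by
    intro g hg
    rw [hS2, Finset.mem_filter] at hg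
    rw [← Fintype.piFinset_univ,
      ← Finset.prod_univ_sum (fun _ : Fin t => (univ : Finset (Finset (Fin a))))
        (fun r U => w a b V j U (g r))]
    rw [Finset.prod_congr rfl (fun r _ => w_col V j hb hj (g r) (hg.2.1 r).1 (hg.2.1 r).2)]
    simp
  have hsupp : ∀ g : Fin t → Finset (Fin a), g ∉ S2 →
      ∀ f ∈ S1, ∏ r, w a b V j (f r) (g r) = 0 := by
    intro g hg f hf
    by_contra hne
    apply hg
    rw [hS1, Finset.mem_filter] at hf
    obtain ⟨-, hfv, hfc⟩ := hf
    have hne' : ∏ r, w a b V j (f r) (g r) ≠ 0 := hne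
    have hw : ∀ r, w a b V j (f r) (g r) ≠ 0 := by
      rw [Finset.prod_ne_zero_iff] at hne'
      exact fun r => hne' r (Finset.mem_univ r)
    have hkey : ∀ r, (f r).erase j ⊆ g r ∧ g r ⊆ V.erase j ∧ (g r).card = b := by
      intro r
      have := hw r
      rw [w, if_pos ⟨(hfv r).1, (hfv r).2⟩] at this
      by_cases hjf : j ∈ f r
      · rw [if_pos hjf] at this
        by_cases hc : (f r).erase j ⊆ g r ∧ g r ⊆ V.erase j ∧ (g r).card = b
        · exact hc
        · rw [if_neg hc] at this; exact absurd rfl this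
      · rw [if_neg hjf] at this
        by_cases hgf : g r = f r
        · rw [hgf]
          refine ⟨Finset.erase_subset _ _, Finset.subset_erase.mpr ⟨(hfv r).1, hjf⟩,
            (hfv r).2⟩
        · rw [if_neg hgf, mul_zero] at this; exact absurd rfl this
    rw [hS2, Finset.mem_filter]
    refine ⟨Finset.mem_univ _, fun r => ⟨(hkey r).2.1, (hkey r).2.2⟩, ?_⟩
    intro i hi
    obtain ⟨r, hr⟩ := hfc i hi
    have hij : i ≠ j := fun h => hjI (h ▸ hi)
    exact ⟨r, (hkey r).1 (Finset.mem_erase.mpr ⟨hij, hr⟩)⟩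
  have h1 : cnt a b t V I * (V.card - b) ^ t
      = ∑ f ∈ S1, ∑ g : Fin t → Finset (Fin a), ∏ r, w a b V j (f r) (g r) := by
    rw [Finset.sum_congr rfl hrow, Finset.sum_const, smul_eq_mul]
    rfl
  have h2 : ∑ f ∈ S1, ∑ g : Fin t → Finset (Fin a), ∏ r, w a b V j (f r) (g r)
      = ∑ g ∈ S2, ∑ f ∈ S1, ∏ r, w a b V j (f r) (g r) := by
    rw [Finset.sum_comm]
    symm
    apply Finset.sum_subset (Finset.subset_univ S2)
    intro g _ hg
    exact Finset.sum_eq_zero (fun f hf => hsupp g hg f hf)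
  have h3 : ∑ g ∈ S2, ∑ f ∈ S1, ∏ r, w a b V j (f r) (g r)
      ≤ ∑ g ∈ S2, (V.card : ℕ) ^ t := by
    apply Finset.sum_le_sum
    intro g hg
    calc ∑ f ∈ S1, ∏ r, w a b V j (f r) (g r)
        ≤ ∑ f : Fin t → Finset (Fin a), ∏ r, w a b V j (f r) (g r) :=
          Finset.sum_le_sum_of_subset (Finset.subset_univ S1)
      _ = V.card ^ t := hcol g hg
  rw [h1, h2]
  calc _ ≤ _ := h3
    _ = cnt a b t (V.erase j) I * V.card ^ t := by
        rw [Finset.sum_const, smul_eq_mul]; rfl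



lemma choose_id {a b : ℕ} (hba : b ≤ a) :
    a * Nat.choose (a - 1) b = (a - b) * Nat.choose a b := by
  rcases eq_or_lt_of_le hba with rfl | hlt
  · cases b <;> simp [Nat.choose_eq_zero_of_lt]
  · have hb1 : b ≤ a - 1 := by omega
    have h1 := Nat.choose_mul_factorial_mul_factorial hb1
    have h2 := Nat.choose_mul_factorial_mul_factorial hba
    have hpos : 0 < b.factorial * (a - 1 - b).factorial :=
      Nat.mul_pos (Nat.factorial_pos _) (Nat.factorial_pos _)
    apply Nat.eq_of_mul_eq_mul_right hpos
    calc a * Nat.choose (a-1) b * (b.factorial * (a-1-b).factorial)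
        = a * (Nat.choose (a-1) b * b.factorial * (a-1-b).factorial) := by ring
      _ = a * (a-1).factorial := by rw [h1]
      _ = a.factorial := Nat.mul_factorial_pred (by omega)
      _ = Nat.choose a b * b.factorial * (a - b).factorial := h2.symm
      _ = Nat.choose a b * b.factorial * ((a - b) * ((a-b) - 1).factorial) := by
          rw [Nat.mul_factorial_pred (by omega)]
      _ = Nat.choose a b * b.factorial * ((a - b) * (a - 1 - b).factorial) := by
          congr 3
          omega
      _ = (a - b) * Nat.choose a b * (b.factorial * (a-1-b).factorial) := by ring

lemma cnt_step' {a b t : ℕ} (I : Finset (Fin a)) (j : Fin a)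
    (hb : 0 < b) (hba : b ≤ a) (ht : 0 < t) (hjI : j ∉ I) :
    cnt a b t univ I * ((a-1).choose b) ^ t
      ≤ cnt a b t ((univ : Finset (Fin a)).erase j) I * (a.choose b) ^ t := by
  rcases eq_or_lt_of_le hba with rfl | hlt
  · have : (b - 1).choose b = 0 := Nat.choose_eq_zero_of_lt (by omega)
    rw [this, Nat.zero_pow (by omega)]
    simp
  · have h := cnt_step (t := t) univ I j hb (mem_univ j) hjI
    rw [Finset.card_univ, Fintype.card_fin] at h
    have key : cnt a b t univ I * ((a-1).choose b) ^ t * (a - b) ^ t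
        ≤ cnt a b t (univ.erase j) I * (a.choose b) ^ t * (a - b) ^ t := by
      calc cnt a b t univ I * ((a-1).choose b) ^ t * (a - b) ^ t
          = cnt a b t univ I * (a - b) ^ t * ((a-1).choose b) ^ t := by ring
        _ ≤ cnt a b t (univ.erase j) I * a ^ t * ((a-1).choose b) ^ t :=
            Nat.mul_le_mul_right _ h
        _ = cnt a b t (univ.erase j) I * (a * (a-1).choose b) ^ t := by
            rw [mul_pow]; ring
        _ = cnt a b t (univ.erase j) I * ((a - b) * a.choose b) ^ t := by
            rw [choose_id hba]
        _ = cnt a b t (univ.erase j) I * (a.choose b) ^ t * (a - b) ^ t := by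
            rw [mul_pow]; ring
    exact Nat.le_of_mul_le_mul_right key (pow_pos (by omega) t)

lemma main_ind {a b t : ℕ} (hb : 0 < b) (hba : b ≤ a) (ht : 0 < t)
    (I : Finset (Fin a)) :
    cnt a b t univ I * ((a.choose b) ^ t) ^ I.card
      ≤ ((a.choose b) ^ t - ((a-1).choose b) ^ t) ^ I.card * (a.choose b) ^ t := by
  classical
  induction I using Finset.induction_on with
  | empty =>
      rw [cnt_empty, Finset.card_univ, Fintype.card_fin]
      simp
  | @insert j I hjI ih =>
      set C := (a.choose b) ^ t with hC
      set D := ((a-1).choose b) ^ t with hD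
      set X := cnt a b t univ I with hX
      set Y := cnt a b t univ (insert j I) with hY
      set E := cnt a b t ((univ : Finset (Fin a)).erase j) I with hE
      have hsplit : X = Y + E := cnt_split univ I j hjI
      have hstep : X * D ≤ E * C := cnt_step' I j hb hba ht hjI
      have hDC : D ≤ C :=
        Nat.pow_le_pow_left (Nat.choose_le_choose b (by omega)) t
      have hkey : Y * C ≤ X * (C - D) := by
        have h1 : Y * C + X * D ≤ Y * C + E * C := Nat.add_le_add_left hstep _
        have h2 : Y * C + E * C = X * C := by rw [← Nat.add_mul, ← hsplit]
        have h3 : X * C = X * (C - D) + X * D := by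
          rw [← Nat.mul_add, Nat.sub_add_cancel hDC]
        exact Nat.le_of_add_le_add_right (h1.trans_eq (h2.trans h3))
      rw [Finset.card_insert_of_notMem hjI]
      calc Y * C ^ (I.card + 1) = (Y * C) * C ^ I.card := by ring
        _ ≤ (X * (C - D)) * C ^ I.card := Nat.mul_le_mul_right _ hkey
        _ = (C - D) * (X * C ^ I.card) := by ring
        _ ≤ (C - D) * ((C - D) ^ I.card * C) := Nat.mul_le_mul_left _ ih
        _ = (C - D) ^ (I.card + 1) * C := by ring

lemma cnt_singleton {a b t : ℕ} (j : Fin a) :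
    cnt a b t univ {j} + ((a-1).choose b) ^ t = (a.choose b) ^ t := by
  have h := cnt_split (t := t) (b := b) univ (∅ : Finset (Fin a)) j (Finset.notMem_empty j)
  rw [cnt_empty, cnt_empty, Finset.card_univ, Fintype.card_fin,
    Finset.card_erase_of_mem (mem_univ j), Finset.card_univ, Fintype.card_fin] at h
  simpa using h.symm




lemma nat_card_eq {a b t : ℕ} (Q : (Fin t → Finset (Fin a)) → Prop) [DecidablePred Q] :
    Nat.card {f : Fin t → BSubset a b // Q (fun r => (f r).1)} =
      (univ.filter (fun g : Fin t → Finset (Fin a) =>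
        (∀ r, (g r).card = b) ∧ Q g)).card := by
  classical
  have e : {f : Fin t → BSubset a b // Q (fun r => (f r).1)} ≃
      {g : Fin t → Finset (Fin a) // (∀ r, (g r).card = b) ∧ Q g} :=
    { toFun := fun f => ⟨fun r => (f.1 r).1, fun r => (f.1 r).2, f.2⟩
      invFun := fun g => ⟨fun r => ⟨g.1 r, g.2.1 r⟩, g.2.2⟩
      left_inv := fun f => rfl
      right_inv := fun g => rfl }
  rw [Nat.card_congr e, Nat.card_eq_fintype_card, Fintype.card_subtype]

lemma filter_eq_cnt {a b t : ℕ} (I : Finset (Fin a)) :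
    (univ.filter (fun g : Fin t → Finset (Fin a) =>
        (∀ r, (g r).card = b) ∧ ∀ j ∈ I, ∃ r, j ∈ g r)).card = cnt a b t univ I := by
  rw [cnt]
  apply congrArg Finset.card
  apply Finset.filter_congr
  intro g _
  constructor
  · rintro ⟨h1, h2⟩; exact ⟨fun r => ⟨Finset.subset_univ _, h1 r⟩, h2⟩
  · rintro ⟨h1, h2⟩; exact ⟨fun r => (h1 r).2, h2⟩

lemma total_card {a b t : ℕ} :
    Nat.card (Fin t → BSubset a b) = (a.choose b) ^ t := by
  classical
  have h := Nat.card_congr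
    (Equiv.subtypeUnivEquiv (p := fun f : Fin t → BSubset a b =>
      (fun _ : Fin t → Finset (Fin a) => True) (fun r => (f r).1)) (fun _ => trivial)).symm
  rw [h, nat_card_eq (fun _ : Fin t → Finset (Fin a) => True)]
  have : (univ.filter (fun g : Fin t → Finset (Fin a) =>
      (∀ r, (g r).card = b) ∧ True)).card = cnt a b t univ ∅ := by
    rw [← filter_eq_cnt]
    apply congrArg Finset.card
    apply Finset.filter_congr
    intro g _
    simp
  rw [this, cnt_empty, Finset.card_univ, Fintype.card_fin]




/-- If `S_1, …, S_t` are independent uniformly random `b`-element subsets of `[a]`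
and `S = S_1 ∪ ⋯ ∪ S_t`, then the indicators of the events `{j ∈ S}` are negatively
correlated: for every `I ⊆ [a]`, `P(I ⊆ S) ≤ ∏_{j ∈ I} P(j ∈ S)`. -/
theorem statement_12 (a b t : ℕ) (ha : 0 < a) (hb : 0 < b) (ht : 0 < t)
    (hba : b ≤ a) (I : Finset (Fin a)) :
    tupleProb a b t (fun f => ∀ j ∈ I, ∃ r : Fin t, j ∈ (f r).1) ≤
      ∏ j ∈ I, tupleProb a b t (fun f => ∃ r : Fin t, j ∈ (f r).1) := by
  classical
  set CN : ℕ := (a.choose b) ^ t with hCN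
  set DN : ℕ := ((a-1).choose b) ^ t with hDN
  have hCpos : 0 < CN := pow_pos (Nat.choose_pos hba) t
  have h1 : tupleProb a b t (fun f => ∀ j ∈ I, ∃ r : Fin t, j ∈ (f r).1)
      = (cnt a b t univ I : ℝ) / (CN : ℝ) := by
    rw [tupleProb, total_card,
      nat_card_eq (fun g : Fin t → Finset (Fin a) => ∀ j ∈ I, ∃ r, j ∈ g r),
      filter_eq_cnt]
  have h2 : ∀ j : Fin a, tupleProb a b t (fun f => ∃ r : Fin t, j ∈ (f r).1)
      = ((CN - DN : ℕ) : ℝ) / (CN : ℝ) := by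
    intro j
    have hc : (univ.filter (fun g : Fin t → Finset (Fin a) =>
        (∀ r, (g r).card = b) ∧ ∃ r, j ∈ g r)).card = cnt a b t univ {j} := by
      rw [← filter_eq_cnt]
      apply congrArg Finset.card
      apply Finset.filter_congr
      intro g _
      simp
    have hs : cnt a b t univ {j} = CN - DN := by
      rw [hCN, hDN]
      exact Nat.eq_sub_of_add_eq (cnt_singleton (b := b) (t := t) j)
    rw [tupleProb, total_card,
      nat_card_eq (fun g : Fin t → Finset (Fin a) => ∃ r, j ∈ g r), hc, hs]
  rw [h1, Finset.prod_congr rfl (fun j _ => h2 j), Finset.prod_const]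
  rw [div_pow, div_le_div_iff₀ (by positivity) (by positivity)]
  have := main_ind hb hba ht I
  push_cast
  exact_mod_cast this



end DP
end

section
/- Let a, b, t be positive integers with b ≤ a, let S_1, …, S_t be independent random sets each chosen uniformly at random among all b-element subsets of [a] = {1,…,a}, and let S = S_1 ∪ ⋯ ∪ S_t. Then for every subset I ⊆ [a] and every j ∈ [a] \ I, one has P(I ⊆ S and j ∉ S) ≥ P(I ⊆ S) · P(j ∉ S). -/
/-!
Exchange argument. Couple a uniform `b`-set `S` with the set `T` obtained by replacing `j`, if it
lies in `S`, by a uniform element outside `S`. Then `T` is uniform among the `b`-sets avoiding `j`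
and `T ⊇ S \ {j}`. Doing this coordinatewise turns tuples with `I ⊆ ⋃ S_r` into tuples with
`I ⊆ ⋃ T_r` and `j ∉ ⋃ T_r`, so `P(I ⊆ S) ≤ P(I ⊆ S | j ∉ S)`.
Cleared of denominators, the coupling is an integer weight with row sums `≥ a - b` and column sums
`≤ a`, and double counting gives `(a - b)^t · #{I ⊆ S} ≤ a^t · #{I ⊆ S, j ∉ S}`; finally
`P(j ∉ S) = ((a - b) / a)^t` because `a · C(a - 1, b) = (a - b) · C(a, b)`.
-/

namespace DP

open Finset

instance (a b : ℕ) : Fintype (BSubset a b) :=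
  inferInstanceAs (Fintype {s : Finset (Fin a) // s.card = b})

theorem card_mul_le_card_mul_of_weight {α β : Type*} (w : α → β → ℕ) {s : Finset α}
    {t : Finset β} {m n : ℕ} (hs : ∀ x ∈ s, m ≤ ∑ y ∈ t, w x y)
    (ht : ∀ y ∈ t, ∑ x ∈ s, w x y ≤ n) : #s * m ≤ #t * n :=
  calc #s * m ≤ ∑ x ∈ s, ∑ y ∈ t, w x y := card_nsmul_le_sum s _ m hs
    _ = ∑ y ∈ t, ∑ x ∈ s, w x y := sum_comm
    _ ≤ #t * n := sum_le_card_nsmul t _ n ht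

section ExchangeWeight

variable {a b : ℕ}

/-- `a - b` times the probability that the coupling moves `S` to `T`. -/
def exchangeWeight (j : Fin a) (S T : BSubset a b) : ℕ :=
  if j ∉ T.1 ∧ S.1.erase j ⊆ T.1 then (if j ∈ S.1 then 1 else a - b) else 0

lemma exchangeWeight_ne_zero {j : Fin a} {S T : BSubset a b} (h : exchangeWeight j S T ≠ 0) :
    j ∉ T.1 ∧ S.1.erase j ⊆ T.1 := by
  by_contra h'
  exact h (if_neg h')

lemma sub_le_sum_exchangeWeight (j : Fin a) (S : BSubset a b) :
    a - b ≤ ∑ T, exchangeWeight j S T := by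
  by_cases hjS : j ∈ S.1
  · have hb : 1 ≤ b := S.2 ▸ card_pos.2 ⟨j, hjS⟩
    have hx_erase {x : Fin a} (hx : x ∉ S.1) : x ∉ S.1.erase j := fun h => hx (mem_of_mem_erase h)
    let exchange (x : {x // x ∉ S.1}) : {T : BSubset a b // j ∉ T.1 ∧ S.1.erase j ⊆ T.1} :=
      ⟨⟨insert x.1 (S.1.erase j), by
          rw [card_insert_of_notMem (hx_erase x.2), card_erase_of_mem hjS, S.2]; omega⟩,
        by simp [ne_of_mem_of_not_mem hjS x.2], subset_insert _ _⟩
    have hinj : Function.Injective exchange := fun x y hxy =>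
      Subtype.ext ((insert_inj (hx_erase x.2)).1 (congrArg (·.1.1) hxy))
    calc a - b = Fintype.card {x // x ∉ S.1} := by simp [S.2]
      _ ≤ Fintype.card {T : BSubset a b // j ∉ T.1 ∧ S.1.erase j ⊆ T.1} :=
        Fintype.card_le_of_injective exchange hinj
      _ = ∑ T, exchangeWeight j S T := by
        simp [exchangeWeight, hjS, Fintype.card_subtype, sum_boole]
  · calc a - b = exchangeWeight j S S := by simp [exchangeWeight, hjS, erase_eq_of_notMem]
      _ ≤ ∑ T, exchangeWeight j S T := single_le_sum (fun _ _ => Nat.zero_le _) (mem_univ S)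

lemma sum_exchangeWeight_le (j : Fin a) (T : BSubset a b) : ∑ S, exchangeWeight j S T ≤ a := by
  by_cases hjT : j ∈ T.1
  · simp [exchangeWeight, hjT]
  have hba : b ≤ a := T.2 ▸ (card_le_univ T.1).trans_eq (Fintype.card_fin a)
  -- a set `S ∋ j` of positive weight is recovered from the `(b - 1)`-subset `S.erase j` of `T`
  have hmem : ∑ S with j ∈ S.1, exchangeWeight j S T ≤ b := by
    rcases Nat.eq_zero_or_pos b with rfl | hb
    · refine (sum_eq_zero fun S hS => ?_).le
      exact absurd (S.2 ▸ card_pos.2 ⟨j, (mem_filter.1 hS).2⟩) (lt_irrefl 0)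
    calc ∑ S with j ∈ S.1, exchangeWeight j S T
        = #{S : BSubset a b | j ∈ S.1 ∧ S.1.erase j ⊆ T.1} := by
          rw [sum_filter, card_filter]
          exact sum_congr rfl fun S _ => by
            by_cases hjS : j ∈ S.1 <;> simp [exchangeWeight, hjS, hjT]
      _ ≤ #(T.1.powersetCard (b - 1)) := by
          refine card_le_card_of_injOn (fun S => S.1.erase j) (fun S hS => ?_) ?_
          · obtain ⟨hjS, hsub⟩ := (mem_filter.1 (mem_coe.1 hS)).2
            simp [mem_powersetCard, hsub, card_erase_of_mem hjS, S.2]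
          · intro S hS S' hS' h
            have hjS := (mem_filter.1 (mem_coe.1 hS)).2.1
            have hjS' := (mem_filter.1 (mem_coe.1 hS')).2.1
            exact Subtype.ext (by rw [← insert_erase hjS, ← insert_erase hjS']; exact congrArg _ h)
      _ = b := by
          obtain ⟨n, rfl⟩ := Nat.exists_eq_add_one_of_ne_zero hb.ne'
          simp [card_powersetCard, T.2]
  -- a set `S ∌ j` of positive weight is contained in `T`, hence equal to it
  have hnotMem : ∑ S with j ∉ S.1, exchangeWeight j S T ≤ a - b := by
    rw [sum_eq_single_of_mem T (by simp [hjT])]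
    · simp [exchangeWeight, hjT, erase_eq_of_notMem]
    · intro S hS hST
      simp only [mem_filter, mem_univ, true_and] at hS
      by_contra h
      have hsub := (exchangeWeight_ne_zero h).2
      rw [erase_eq_of_notMem hS] at hsub
      exact hST (Subtype.ext (eq_of_subset_of_card_le hsub (by rw [S.2, T.2])))
  rw [← sum_filter_add_sum_filter_not univ (fun S => j ∈ S.1)]
  omega

end ExchangeWeight

section Tuples

variable {a b t : ℕ}

def Covers (I : Finset (Fin a)) (f : Fin t → BSubset a b) : Prop :=
  ∀ i ∈ I, ∃ r, i ∈ (f r).1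

def Avoids (j : Fin a) (f : Fin t → BSubset a b) : Prop :=
  ∀ r, j ∉ (f r).1

lemma covers_and_avoids_of_prod_exchangeWeight_ne_zero {I : Finset (Fin a)} {j : Fin a}
    (hj : j ∉ I) {f g : Fin t → BSubset a b} (hf : Covers I f)
    (hfg : ∏ r, exchangeWeight j (f r) (g r) ≠ 0) : Covers I g ∧ Avoids j g := by
  have hw r := exchangeWeight_ne_zero (prod_ne_zero_iff.1 hfg r (mem_univ r))
  refine ⟨fun i hi => ?_, fun r => (hw r).1⟩
  obtain ⟨r, hr⟩ := hf i hi
  exact ⟨r, (hw r).2 (mem_erase.2 ⟨ne_of_mem_of_not_mem hi hj, hr⟩)⟩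

theorem pow_mul_card_covers_le (I : Finset (Fin a)) {j : Fin a} (hj : j ∉ I) :
    (a - b) ^ t * Nat.card {f : Fin t → BSubset a b // Covers I f} ≤
      a ^ t * Nat.card {f : Fin t → BSubset a b // Covers I f ∧ Avoids j f} := by
  classical
  simp only [Nat.card_eq_fintype_card, Fintype.card_subtype]
  rw [mul_comm, mul_comm (a ^ t)]
  refine card_mul_le_card_mul_of_weight (fun f g => ∏ r, exchangeWeight j (f r) (g r))
    (fun f hf => ?_) (fun g _ => ?_)
  · have hf : Covers I f := (mem_filter.1 hf).2
    calc (a - b) ^ t = ∏ _r : Fin t, (a - b) := by simp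
      _ ≤ ∏ r, ∑ T, exchangeWeight j (f r) T :=
        prod_le_prod' fun r _ => sub_le_sum_exchangeWeight j (f r)
      _ = ∑ g : Fin t → BSubset a b, ∏ r, exchangeWeight j (f r) (g r) := by
        rw [Fintype.prod_sum]
      _ = _ := (sum_subset (subset_univ _) fun g _ hg => by
          by_contra h
          exact hg (mem_filter.2 ⟨mem_univ g,
            covers_and_avoids_of_prod_exchangeWeight_ne_zero hj hf h⟩)).symm
  · calc _ ≤ ∑ f : Fin t → BSubset a b, ∏ r, exchangeWeight j (f r) (g r) :=
          sum_le_sum_of_subset (subset_univ _)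
      _ = ∏ r, ∑ S, exchangeWeight j S (g r) := by
        rw [Fintype.prod_sum]
      _ ≤ ∏ _r : Fin t, a := prod_le_prod' fun r _ => sum_exchangeWeight_le j (g r)
      _ = a ^ t := by simp

end Tuples

section Probability

variable {a b t : ℕ}

lemma tupleProb_nonneg (P : (Fin t → BSubset a b) → Prop) : 0 ≤ tupleProb a b t P :=
  div_nonneg (Nat.cast_nonneg _) (Nat.cast_nonneg _)

lemma tupleProb_eq_card_div (P : (Fin t → BSubset a b) → Prop) :
    tupleProb a b t P = Nat.card {f // P f} / (Nat.card (BSubset a b) : ℝ) ^ t := by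
  rw [tupleProb, Nat.card_fun, Nat.card_fin, Nat.cast_pow]

lemma card_avoids (j : Fin a) :
    Nat.card {f : Fin t → BSubset a b // Avoids j f} =
      Nat.card {S : BSubset a b // j ∉ S.1} ^ t := by
  have e : {f : Fin t → BSubset a b // Avoids j f} ≃ (Fin t → {S : BSubset a b // j ∉ S.1}) :=
    Equiv.subtypePiEquivPi (p := fun _ (S : BSubset a b) => j ∉ S.1)
  rw [Nat.card_congr e, Nat.card_fun, Nat.card_fin]

lemma card_notMem_mul (j : Fin a) :
    Nat.card {S : BSubset a b // j ∉ S.1} * a = (a - b) * Nat.card (BSubset a b) := by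
  have hN : Nat.card (BSubset a b) = a.choose b := by
    rw [Nat.card_eq_fintype_card]
    exact (Fintype.card_finset_len b).trans (by rw [Fintype.card_fin])
  have e : {S : BSubset a b // j ∉ S.1} ≃ powersetCard b (univ.erase j) :=
    (Equiv.subtypeSubtypeEquivSubtypeInter (fun s : Finset (Fin a) => #s = b) (j ∉ ·)).trans
      (Equiv.subtypeEquivRight fun s => by simp [mem_powersetCard, subset_erase, and_comm])
  have hM : Nat.card {S : BSubset a b // j ∉ S.1} = (a - 1).choose b := by
    rw [Nat.card_congr e, Nat.card_eq_finsetCard, card_powersetCard, card_erase_of_mem (mem_univ j),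
      card_univ, Fintype.card_fin]
  obtain ⟨n, rfl⟩ := Nat.exists_eq_add_one_of_ne_zero j.pos.ne'
  rw [hN, hM, Nat.add_sub_cancel, Nat.choose_mul_succ_eq, mul_comm]

lemma pow_mul_tupleProb_covers_le (I : Finset (Fin a)) {j : Fin a} (hj : j ∉ I) :
    ((a - b : ℕ) : ℝ) ^ t * tupleProb a b t (Covers I) ≤
      (a : ℝ) ^ t * tupleProb a b t (fun f => Covers I f ∧ Avoids j f) := by
  simp only [tupleProb_eq_card_div, mul_div_assoc']
  refine div_le_div_of_nonneg_right ?_ (by positivity)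
  exact_mod_cast pow_mul_card_covers_le I hj

lemma pow_mul_tupleProb_avoids_le (j : Fin a) :
    (a : ℝ) ^ t * tupleProb a b t (Avoids j) ≤ ((a - b : ℕ) : ℝ) ^ t := by
  set N : ℝ := (Nat.card (BSubset a b) : ℝ)
  calc (a : ℝ) ^ t * tupleProb a b t (Avoids j)
      = ((Nat.card {S : BSubset a b // j ∉ S.1} * a : ℕ) : ℝ) ^ t / N ^ t := by
        rw [tupleProb_eq_card_div, card_avoids]; push_cast; ring
    _ = ((a - b : ℕ) : ℝ) ^ t * (N ^ t / N ^ t) := by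
        rw [card_notMem_mul]; push_cast; ring
    _ ≤ ((a - b : ℕ) : ℝ) ^ t := mul_le_of_le_one_right (by positivity) (div_self_le_one _)

end Probability

theorem statement_13_general (a b t : ℕ) (I : Finset (Fin a)) (j : Fin a) (hj : j ∉ I) :
    tupleProb a b t (fun f => (∀ i ∈ I, ∃ r : Fin t, i ∈ (f r).1) ∧
        ∀ r : Fin t, j ∉ (f r).1) ≥
      tupleProb a b t (fun f => ∀ i ∈ I, ∃ r : Fin t, i ∈ (f r).1) *
        tupleProb a b t (fun f => ∀ r : Fin t, j ∉ (f r).1) := by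
  have hpos : (0 : ℝ) < (a : ℝ) ^ t := pow_pos (Nat.cast_pos.2 j.pos) t
  refine le_of_mul_le_mul_left ?_ hpos
  calc (a : ℝ) ^ t * (tupleProb a b t (Covers I) * tupleProb a b t (Avoids j))
      = tupleProb a b t (Covers I) * ((a : ℝ) ^ t * tupleProb a b t (Avoids j)) := by ring
    _ ≤ tupleProb a b t (Covers I) * ((a - b : ℕ) : ℝ) ^ t :=
        mul_le_mul_of_nonneg_left (pow_mul_tupleProb_avoids_le j) (tupleProb_nonneg _)
    _ = ((a - b : ℕ) : ℝ) ^ t * tupleProb a b t (Covers I) := mul_comm _ _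
    _ ≤ (a : ℝ) ^ t * tupleProb a b t (fun f => Covers I f ∧ Avoids j f) :=
        pow_mul_tupleProb_covers_le I hj

/-- If `S_1, …, S_t` are independent uniformly random `b`-element subsets of `[a]`
and `S = S_1 ∪ ⋯ ∪ S_t`, then for every `I ⊆ [a]` and `j ∈ [a] \ I`,
`P(I ⊆ S ∧ j ∉ S) ≥ P(I ⊆ S) · P(j ∉ S)`. -/
theorem statement_13 (a b t : ℕ) (ha : 0 < a) (hb : 0 < b) (ht : 0 < t)
    (hba : b ≤ a) (I : Finset (Fin a)) (j : Fin a) (hj : j ∉ I) :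
    tupleProb a b t (fun f => (∀ i ∈ I, ∃ r : Fin t, i ∈ (f r).1) ∧
        ∀ r : Fin t, j ∉ (f r).1) ≥
      tupleProb a b t (fun f => ∀ i ∈ I, ∃ r : Fin t, i ∈ (f r).1) *
        tupleProb a b t (fun f => ∀ r : Fin t, j ∉ (f r).1) :=
  statement_13_general a b t I j hj

end DP
end
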